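/- arXiv:1709.07649 — 7 statements merged into one kernel-verified Lean document; each statement's English description precedes it below -/
import Mathlib

section
/- Let N be a characteristic subgroup of a group G. If the quotient group G/N has the R∞-property, then G has the R∞-property. -/
open Matrix

noncomputable section

/-- Twisted conjugacy relation for an endomorphism `φ`. -/
def twistedConj {G : Type*} [Group G] (φ : G →* G) (g g' : G) : Prop :=
  ∃ h : G, g = h * g' * (φ h)⁻¹

/-- The Reidemeister number of an endomorphism: the number of twisted conjugacy classes. -/
noncomputable def reidemeisterNumber {G : Type*} [Group G] (φ : G →* G) : ℕ∞ :=
  ENat.card (Quot (twistedConj φ))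

/-- The Reidemeister spectrum of a group. -/
noncomputable def reidemeisterSpectrum (G : Type*) [Group G] : Set ℕ∞ :=
  {r : ℕ∞ | ∃ φ : G ≃* G, reidemeisterNumber (φ : G →* G) = r}


/-- If `N` is a characteristic subgroup of `G` and `G/N` has the `R∞`-property,
then so does `G`. -/
theorem stmt1 {G : Type*} [Group G] (N : Subgroup G) [N.Normal]
    (hchar : N.Characteristic)
    (h : reidemeisterSpectrum (G ⧸ N) = {⊤}) :
    reidemeisterSpectrum G = {⊤} := by
  have key : ∀ φ : G ≃* G, reidemeisterNumber (φ : G →* G) = ⊤ := by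
    intro φ
    have hmap : N.map (φ : G →* G) = N :=
      (Subgroup.characteristic_iff_map_eq.mp hchar) φ
    -- induced automorphism on the quotient
    let ψ : (G ⧸ N) ≃* (G ⧸ N) := QuotientGroup.congr N N φ hmap
    have hψ : reidemeisterNumber (ψ : (G ⧸ N) →* (G ⧸ N)) = ⊤ := by
      have : reidemeisterNumber (ψ : (G ⧸ N) →* (G ⧸ N)) ∈
          reidemeisterSpectrum (G ⧸ N) := ⟨ψ, rfl⟩
      rw [h] at this
      exact this
    -- ψ ∘ mk = mk ∘ φ
    have hcomm : ∀ g : G, ψ (QuotientGroup.mk g) = QuotientGroup.mk (φ g) := by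
      intro g; rfl
    -- surjection on twisted conjugacy classes
    have hsurj : Function.Surjective
        (Quot.map (QuotientGroup.mk (s := N))
          (by
            rintro g g' ⟨k, rfl⟩
            exact ⟨QuotientGroup.mk k, by
              simp [twistedConj, hcomm, QuotientGroup.mk_mul, QuotientGroup.mk_inv]⟩) :
          Quot (twistedConj (φ : G →* G)) → Quot (twistedConj (ψ : (G ⧸ N) →* (G ⧸ N)))) := by
      rintro ⟨x⟩
      obtain ⟨g, rfl⟩ := QuotientGroup.mk_surjective x
      exact ⟨Quot.mk _ g, rfl⟩
    have hinf : Infinite (Quot (twistedConj (φ : G →* G))) := by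
      by_contra hfin
      rw [not_infinite_iff_finite] at hfin
      have : Finite (Quot (twistedConj (ψ : (G ⧸ N) →* (G ⧸ N)))) :=
        Finite.of_surjective _ hsurj
      have := Fintype.ofFinite (Quot (twistedConj (ψ : (G ⧸ N) →* (G ⧸ N))))
      rw [reidemeisterNumber, ENat.card_eq_coe_fintype_card] at hψ
      exact (ENat.coe_ne_top _) hψ
    exact ENat.card_eq_top_of_infinite
  apply Set.eq_singleton_iff_unique_mem.mpr
  constructor
  · exact ⟨MulEquiv.refl G, key _⟩
  · rintro x ⟨φ, rfl⟩
    exact key φ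
end
end

section
/- Let Γ ≤ Aff(ℝⁿ) be an n-dimensional crystallographic group with holonomy group F, and let φ be an automorphism of Γ. Then there exists (d,D) ∈ Aff(ℝⁿ) such that φ(γ) = (d,D) γ (d,D)⁻¹ for all γ ∈ Γ; moreover D lies in GLₙ(ℤ) and D F D⁻¹ = F, i.e. D belongs to the normaliser of F in GLₙ(ℤ). -/
open Matrix

noncomputable section

@[ext]
structure Aff (n : ℕ) where
  tr : Fin n → ℝ
  lin : GL (Fin n) ℝ

namespace Aff

variable {n : ℕ}

instance : Mul (Aff n) :=
  ⟨fun a b => ⟨a.tr + (a.lin : Matrix (Fin n) (Fin n) ℝ) *ᵥ b.tr, a.lin * b.lin⟩⟩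

instance : One (Aff n) := ⟨⟨0, 1⟩⟩

instance : Inv (Aff n) :=
  ⟨fun a => ⟨((a.lin⁻¹ : GL (Fin n) ℝ) : Matrix (Fin n) (Fin n) ℝ) *ᵥ (-a.tr), a.lin⁻¹⟩⟩

theorem mul_def (a b : Aff n) :
    a * b = ⟨a.tr + (a.lin : Matrix (Fin n) (Fin n) ℝ) *ᵥ b.tr, a.lin * b.lin⟩ := rfl

theorem one_def : (1 : Aff n) = ⟨0, 1⟩ := rfl

theorem inv_def (a : Aff n) :
    a⁻¹ = ⟨((a.lin⁻¹ : GL (Fin n) ℝ) : Matrix (Fin n) (Fin n) ℝ) *ᵥ (-a.tr), a.lin⁻¹⟩ := rfl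

instance : Group (Aff n) where
  mul_assoc a b c := by
    ext i
    · simp [mul_def, Matrix.mulVec_add, Matrix.mulVec_mulVec, add_assoc, Units.val_mul]
    · simp [mul_def, mul_assoc]
  one_mul a := by
    ext i
    · simp [mul_def, one_def]
    · simp [mul_def, one_def]
  mul_one a := by
    ext i
    · simp [mul_def, one_def]
    · simp [mul_def, one_def]
  inv_mul_cancel a := by
    ext i
    · simp [mul_def, inv_def, one_def, Matrix.mulVec_neg]
    · simp [mul_def, inv_def, one_def]

end Aff

/-- The translation subgroup of `Γ` is exactly `ℤⁿ × {Iₙ}`. -/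
def HasIntTranslations {n : ℕ} (Γ : Subgroup (Aff n)) : Prop :=
  ∀ v : Fin n → ℝ, (Aff.mk v 1 ∈ Γ ↔ ∃ z : Fin n → ℤ, v = fun i => (z i : ℝ))

/-- The holonomy group of `Γ`, as the set of linear parts of elements of `Γ`. -/
def holonomy {n : ℕ} (Γ : Subgroup (Aff n)) : Set (GL (Fin n) ℝ) :=
  {D : GL (Fin n) ℝ | ∃ a : Fin n → ℝ, Aff.mk a D ∈ Γ}

/-- `D ∈ GLₙ(ℤ)`: both `D` and `D⁻¹` have integer entries. -/
def IsIntegralGL {n : ℕ} (D : GL (Fin n) ℝ) : Prop :=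
  (∀ i j, ∃ z : ℤ, (D : Matrix (Fin n) (Fin n) ℝ) i j = (z : ℝ)) ∧
  (∀ i j, ∃ z : ℤ, ((D⁻¹ : GL (Fin n) ℝ) : Matrix (Fin n) (Fin n) ℝ) i j = (z : ℝ))

/-- `Γ ≤ Aff(ℝⁿ)` is an `n`-dimensional crystallographic group. -/
def IsCrystallographic {n : ℕ} (Γ : Subgroup (Aff n)) : Prop :=
  HasIntTranslations Γ ∧ (holonomy Γ).Finite ∧ ∀ D ∈ holonomy Γ, IsIntegralGL D

/-- Conjugation by `g` maps `Γ` bijectively onto itself, i.e. `ξ_g` is an automorphism of `Γ`. -/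
def XiIsAut {n : ℕ} (g : Aff n) (Γ : Subgroup (Aff n)) : Prop :=
  ∀ γ : Aff n, γ ∈ Γ ↔ g * γ * g⁻¹ ∈ Γ

/-- The automorphism `ξ_{(d,D)}` of `Γ`, given by conjugation by `g = (d,D)`. -/
def xi {n : ℕ} (g : Aff n) (Γ : Subgroup (Aff n)) (h : XiIsAut g Γ) : Γ →* Γ where
  toFun x := ⟨g * (x : Aff n) * g⁻¹, (h x).mp x.2⟩
  map_one' := by
    apply Subtype.ext
    show g * ((1 : Γ) : Aff n) * g⁻¹ = ((1 : Γ) : Aff n)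
    simp
  map_mul' x y := by
    apply Subtype.ext
    show g * ((x * y : Γ) : Aff n) * g⁻¹ =
      (g * (x : Aff n) * g⁻¹) * (g * (y : Aff n) * g⁻¹)
    simp only [Subgroup.coe_mul]
    group

/-- `|x|_∞` for an integer `x`. -/
def intAbsInfty (x : ℤ) : ℕ∞ := if x = 0 then ⊤ else (x.natAbs : ℕ∞)

/-- `O(B,b)`: the number of solutions over `ℤ/2ℤ` of `B̄ x = b̄`. -/
noncomputable def Ocount {n : ℕ} (B : Matrix (Fin n) (Fin n) ℤ) (b : Fin n → ℤ) : ℕ :=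
  Nat.card {x : Fin n → ZMod 2 // (B.map (Int.cast : ℤ → ZMod 2)) *ᵥ x = fun i => ((b i : ZMod 2))}

/-!
The translations `T ≅ ℤⁿ` form a characteristic subgroup of `Γ`. Indeed, if `β = (b, B)` lies in
an abelian normal subgroup, then `β` commutes with its conjugates `(w, 1) β (w, 1)⁻¹`, which forces
`(B - 1)² w = 0` for all `w ∈ ℤⁿ`; a unipotent matrix of finite order is the identity. Hence `φ`
restricts to an automorphism of `ℤⁿ`, given by some `D ∈ GLₙ(ℤ)`, and applying `φ` to
`γ (z, 1) γ⁻¹ = (A z, 1)` yields `lin (φ γ) = D A D⁻¹`. The defect `γ ↦ tr (φ γ) - D (tr γ)` is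
then a `1`-cocycle vanishing on `T`; averaging it over the finite quotient `Γ / T` writes it as
`d - lin (φ γ) d`, which says exactly `φ γ = (d, D) γ (d, D)⁻¹`.
-/

namespace Aff

variable {n : ℕ}

@[simp] lemma tr_mul (a b : Aff n) :
    (a * b).tr = a.tr + (a.lin : Matrix (Fin n) (Fin n) ℝ) *ᵥ b.tr := rfl

@[simp] lemma lin_mul (a b : Aff n) : (a * b).lin = a.lin * b.lin := rfl

@[simp] lemma tr_inv (a : Aff n) :
    a⁻¹.tr = -(((a.lin⁻¹ : GL (Fin n) ℝ) : Matrix (Fin n) (Fin n) ℝ) *ᵥ a.tr) := by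
  simp [inv_def, mulVec_neg]

@[simp] lemma lin_inv (a : Aff n) : a⁻¹.lin = a.lin⁻¹ := rfl

def linHom : Aff n →* GL (Fin n) ℝ where
  toFun := lin
  map_one' := rfl
  map_mul' _ _ := rfl

lemma tr_mul_mul_inv (g γ : Aff n) :
    (g * γ * g⁻¹).tr = g.tr + (g.lin : Matrix (Fin n) (Fin n) ℝ) *ᵥ γ.tr
      - ((g * γ * g⁻¹).lin : Matrix (Fin n) (Fin n) ℝ) *ᵥ g.tr := by
  simp [mulVec_neg, mulVec_mulVec, sub_eq_add_neg, add_assoc]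

lemma mul_mk_one_mul_inv (g : Aff n) (v : Fin n → ℝ) :
    g * ⟨v, 1⟩ * g⁻¹ = ⟨(g.lin : Matrix (Fin n) (Fin n) ℝ) *ᵥ v, 1⟩ := by
  ext : 1
  · rw [tr_mul_mul_inv]; simp
  · simp

lemma mk_one_mul_mul_inv (w : Fin n → ℝ) (β : Aff n) :
    ⟨w, 1⟩ * β * ⟨w, 1⟩⁻¹ = ⟨w + β.tr - (β.lin : Matrix (Fin n) (Fin n) ℝ) *ᵥ w, β.lin⟩ := by
  ext : 1
  · rw [tr_mul_mul_inv]; simp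
  · simp

lemma commute_mk_one (v w : Fin n → ℝ) : Commute (⟨v, 1⟩ : Aff n) ⟨w, 1⟩ := by
  ext : 1
  · simp [add_comm]
  · simp

lemma sq_lin_sub_one_mulVec_eq_zero {β : Aff n} {w : Fin n → ℝ}
    (h : Commute (⟨w, 1⟩ * β * ⟨w, 1⟩⁻¹) β) :
    ((β.lin : Matrix (Fin n) (Fin n) ℝ) - 1) ^ 2 *ᵥ w = 0 := by
  have htr := congrArg tr h.eq
  rw [mk_one_mul_mul_inv] at htr
  simp only [tr_mul, mulVec_add, mulVec_sub] at htr
  simp only [sq, sub_mul, mul_sub, one_mul, mul_one, sub_mulVec, ← mulVec_mulVec, one_mulVec]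
  linear_combination (norm := module) htr

end Aff

lemma IsOfFinOrder.eq_one_of_sq_sub_one_eq_zero {R : Type*} [Ring R] [Algebra ℚ R] {a : R}
    (ha : IsOfFinOrder a) (hsq : (a - 1) ^ 2 = 0) : a = 1 := by
  obtain ⟨m, hm, ham⟩ := isOfFinOrder_iff_pow_eq_one.1 ha
  have hpow : ∀ k : ℕ, a ^ k = 1 + k • (a - 1) := by
    intro k
    induction k with
    | zero => simp
    | succ k ih =>
      rw [pow_succ, ih, add_mul, one_mul, smul_mul_assoc,
        show (a - 1) * a = (a - 1) ^ 2 + (a - 1) by noncomm_ring, hsq, zero_add, succ_nsmul]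
      abel
  have hm' : (m : ℚ) • (a - 1) = 0 := by
    rw [Nat.cast_smul_eq_nsmul, ← add_eq_left (a := (1 : R)), ← hpow, ham]
  rw [← sub_eq_zero, ← inv_smul_smul₀ ((Nat.cast_ne_zero (R := ℚ)).2 hm.ne') (a - 1), hm',
    smul_zero]

lemma Matrix.ext_of_mulVec_intCast {m ι R : Type*} [Fintype ι] [DecidableEq ι] [Ring R]
    {M N : Matrix m ι R}
    (h : ∀ z : ι → ℤ, M *ᵥ (fun i => (z i : R)) = N *ᵥ (fun i => (z i : R))) : M = N := by
  refine ext_of_mulVec_single fun j => ?_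
  have hsingle : (fun i => ((Pi.single j 1 : ι → ℤ) i : R)) = Pi.single j 1 := by
    ext i; simp [Pi.single_apply]
  simpa only [hsingle] using h (Pi.single j 1)

lemma exists_isIntegralGL_mulVec_intCast {n : ℕ} (ψ : (Fin n → ℤ) ≃+ (Fin n → ℤ)) :
    ∃ D : GL (Fin n) ℝ, IsIntegralGL D ∧ ∀ z : Fin n → ℤ,
      (D : Matrix (Fin n) (Fin n) ℝ) *ᵥ (fun i => (z i : ℝ)) = fun i => (ψ z i : ℝ) := by
  let A : GL (Fin n) ℤ :=
    GeneralLinearGroup.toLin.symm (LinearMap.GeneralLinearGroup.ofLinearEquiv ψ.toIntLinearEquiv)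
  have hA : ∀ z, (A : Matrix (Fin n) (Fin n) ℤ) *ᵥ z = ψ z := fun z => by
    rw [← mulVecLin_apply, ← GeneralLinearGroup.toLin_apply]
    simp [A]
  refine ⟨GeneralLinearGroup.map (Int.castRingHom ℝ) A,
    ⟨fun i j => ⟨_, GeneralLinearGroup.map_apply _ i j A⟩,
      fun i j => ⟨(A⁻¹ : GL (Fin n) ℤ) i j, ?_⟩⟩, fun z => ?_⟩
  · rw [← map_inv, GeneralLinearGroup.map_apply]; rfl
  · ext i
    rw [← hA]
    exact (RingHom.map_mulVec (Int.castRingHom ℝ) _ z i).symm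

lemma exists_eq_sub_of_cocycle {G V : Type*} [Group G] [AddCommGroup V] [Module ℚ V]
    (N : Subgroup G) [N.FiniteIndex] (ρ : G → V →+ V) (c : G → V)
    (hc : ∀ g h, c (g * h) = c g + ρ g (c h)) (hN : ∀ h ∈ N, c h = 0) :
    ∃ d : V, ∀ g, c g = d - ρ g d := by
  have hc_mul : ∀ g, ∀ h ∈ N, c (g * h) = c g := fun g h hh => by
    rw [hc, hN h hh, map_zero, add_zero]
  let c' : G ⧸ N → V := Quotient.lift c fun a b hab => by
    rw [← hc_mul a _ (QuotientGroup.leftRel_apply.1 hab), mul_inv_cancel_left]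
  have hc' : ∀ g q, c' (g • q) = c g + ρ g (c' q) := fun g q =>
    QuotientGroup.induction_on q fun h => hc g h
  have : Fintype (G ⧸ N) := Fintype.ofFinite _
  have hk : (Fintype.card (G ⧸ N) : ℚ) ≠ 0 := Nat.cast_ne_zero.2 Fintype.card_ne_zero
  set S := ∑ q, c' q
  refine ⟨(Fintype.card (G ⧸ N) : ℚ)⁻¹ • S, fun g => ?_⟩
  have hS : Fintype.card (G ⧸ N) • c g = S - ρ g S := by
    rw [eq_sub_iff_add_eq]
    calc Fintype.card (G ⧸ N) • c g + ρ g S = ∑ q, c' (g • q) := by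
          simp only [hc', Finset.sum_add_distrib, Finset.sum_const, map_sum, Finset.card_univ, S]
      _ = S := Fintype.sum_equiv (MulAction.toPerm g) _ _ fun q => rfl
  rw [map_rat_smul, ← smul_sub, ← hS, ← Nat.cast_smul_eq_nsmul ℚ, inv_smul_smul₀ hk]

section Crystallographic

variable {n : ℕ} {Γ : Subgroup (Aff n)}

def holonomyHom (Γ : Subgroup (Aff n)) : Γ →* GL (Fin n) ℝ := Aff.linHom.comp Γ.subtype

lemma coe_range_holonomyHom : ((holonomyHom Γ).range : Set (GL (Fin n) ℝ)) = holonomy Γ := by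
  ext A
  constructor
  · rintro ⟨γ, rfl⟩
    exact ⟨(γ : Aff n).tr, γ.2⟩
  · rintro ⟨a, ha⟩
    exact ⟨⟨_, ha⟩, rfl⟩

def translationSubgroup (Γ : Subgroup (Aff n)) : Subgroup Γ := (holonomyHom Γ).ker

lemma commute_of_mem_translationSubgroup {a b : Γ} (ha : a ∈ translationSubgroup Γ)
    (hb : b ∈ translationSubgroup Γ) : Commute a b := by
  obtain ⟨⟨v, A⟩, _⟩ := a
  obtain ⟨⟨w, B⟩, _⟩ := b
  obtain rfl : A = 1 := ha
  obtain rfl : B = 1 := hb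
  exact Subtype.ext (Aff.commute_mk_one v w)

lemma finite_range_holonomyHom (hF : (holonomy Γ).Finite) : Finite (holonomyHom Γ).range := by
  rw [← SetLike.coe_sort_coe, coe_range_holonomyHom]
  exact hF.to_subtype

lemma finiteIndex_translationSubgroup (hF : (holonomy Γ).Finite) :
    (translationSubgroup Γ).FiniteIndex :=
  have := finite_range_holonomyHom hF
  Subgroup.finiteIndex_ker (holonomyHom Γ)

lemma isOfFinOrder_lin (hF : (holonomy Γ).Finite) (γ : Γ) :
    IsOfFinOrder ((γ : Aff n).lin : Matrix (Fin n) (Fin n) ℝ) := by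
  have := finite_range_holonomyHom hF
  exact (Units.coeHom _).isOfFinOrder <| Submonoid.isOfFinOrder_coe.2 <|
    isOfFinOrder_of_finite (⟨holonomyHom Γ γ, γ, rfl⟩ : (holonomyHom Γ).range)

def latticeTranslation (hΓ : HasIntTranslations Γ) (z : Fin n → ℤ) : Γ :=
  ⟨⟨fun i => z i, 1⟩, (hΓ _).2 ⟨z, rfl⟩⟩

section Lattice

variable (hΓ : HasIntTranslations Γ)

@[simp] lemma coe_latticeTranslation (z : Fin n → ℤ) :
    (latticeTranslation hΓ z : Aff n) = ⟨fun i => z i, 1⟩ := rfl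

lemma latticeTranslation_mem (z : Fin n → ℤ) : latticeTranslation hΓ z ∈ translationSubgroup Γ :=
  rfl

lemma latticeTranslation_add (z w : Fin n → ℤ) :
    latticeTranslation hΓ (z + w) = latticeTranslation hΓ z * latticeTranslation hΓ w :=
  Subtype.ext <| Aff.ext (funext fun i => by simp) (by simp)

lemma latticeTranslation_injective : Function.Injective (latticeTranslation hΓ) :=
  fun z w h => funext fun i => by simpa using congrFun (congrArg (fun γ : Γ => (γ : Aff n).tr) h) i

lemma exists_latticeTranslation_eq {γ : Γ} (hγ : γ ∈ translationSubgroup Γ) :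
    ∃ z, latticeTranslation hΓ z = γ := by
  obtain ⟨⟨v, A⟩, hv⟩ := γ
  obtain rfl : A = 1 := hγ
  obtain ⟨z, rfl⟩ := (hΓ v).1 hv
  exact ⟨z, rfl⟩

end Lattice

lemma le_translationSubgroup_of_commute (hΓ : HasIntTranslations Γ) (hF : (holonomy Γ).Finite)
    {N : Subgroup Γ} [N.Normal] (hN : ∀ a ∈ N, ∀ b ∈ N, Commute a b) :
    N ≤ translationSubgroup Γ := by
  intro β hβ
  refine Units.ext ((isOfFinOrder_lin hF β).eq_one_of_sq_sub_one_eq_zero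
    (Matrix.ext_of_mulVec_intCast fun z => ?_))
  rw [zero_mulVec]
  have := hN _ (‹N.Normal›.conj_mem β hβ (latticeTranslation hΓ z)) β hβ
  exact Aff.sq_lin_sub_one_mulVec_eq_zero (congrArg Subtype.val this.eq)

end Crystallographic

section Automorphism

variable {n : ℕ} {Γ : Subgroup (Aff n)}

lemma map_translationSubgroup_le (hΓ : HasIntTranslations Γ) (hF : (holonomy Γ).Finite)
    (φ : Γ ≃* Γ) : (translationSubgroup Γ).map φ.toMonoidHom ≤ translationSubgroup Γ := by
  have : ((translationSubgroup Γ).map φ.toMonoidHom).Normal :=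
    (holonomyHom Γ).normal_ker.map _ φ.surjective
  refine le_translationSubgroup_of_commute hΓ hF ?_
  rintro _ ⟨a, ha, rfl⟩ _ ⟨b, hb, rfl⟩
  exact (commute_of_mem_translationSubgroup ha hb).map φ

lemma exists_addEquiv_map_latticeTranslation (hΓ : HasIntTranslations Γ)
    (hF : (holonomy Γ).Finite) (φ : Γ ≃* Γ) :
    ∃ ψ : (Fin n → ℤ) ≃+ (Fin n → ℤ),
      ∀ z, φ (latticeTranslation hΓ z) = latticeTranslation hΓ (ψ z) := by
  have hmap (σ : Γ ≃* Γ) (z : Fin n → ℤ) :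
      ∃ w, σ (latticeTranslation hΓ z) = latticeTranslation hΓ w :=
    (exists_latticeTranslation_eq hΓ (map_translationSubgroup_le hΓ hF σ
      ⟨_, latticeTranslation_mem hΓ z, rfl⟩)).imp fun _ => Eq.symm
  choose f hf using hmap φ
  choose g hg using hmap φ.symm
  have hinj := latticeTranslation_injective hΓ
  have hgf (z) : g (f z) = z := hinj (by rw [← hg, ← hf, φ.symm_apply_apply])
  have hfg (z) : f (g z) = z := hinj (by rw [← hf, ← hg, φ.apply_symm_apply])
  have hadd (z w) : f (z + w) = f z + f w :=
    hinj (by rw [latticeTranslation_add, ← hf, ← hf, ← hf, latticeTranslation_add, map_mul])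
  exact ⟨⟨⟨f, g, hgf, hfg⟩, hadd⟩, hf⟩

section LinearPart

variable (hΓ : HasIntTranslations Γ) (φ : Γ ≃* Γ) (D : GL (Fin n) ℝ)

def ActsOnLatticeBy : Prop :=
  ∀ z : Fin n → ℤ, (φ (latticeTranslation hΓ z) : Aff n) =
    ⟨(D : Matrix (Fin n) (Fin n) ℝ) *ᵥ fun i => z i, 1⟩

variable {hΓ φ D}

lemma lin_map_mul_eq (hD : ActsOnLatticeBy hΓ φ D) (γ : Γ) :
    ((φ γ : Aff n).lin : Matrix (Fin n) (Fin n) ℝ) * D = D * (γ : Aff n).lin := by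
  refine Matrix.ext_of_mulVec_intCast fun z => ?_
  obtain ⟨w, hw⟩ := exists_latticeTranslation_eq hΓ
    ((holonomyHom Γ).normal_ker.conj_mem _ (latticeTranslation_mem hΓ z) γ)
  have hγ := congrArg (fun x : Γ => (x : Aff n).tr) hw
  have hφγ := congrArg (fun x : Γ => (φ x : Aff n).tr) hw
  simp only [map_mul, map_inv, Subgroup.coe_mul, Subgroup.coe_inv, hD z, hD w,
    coe_latticeTranslation, Aff.mul_mk_one_mul_inv] at hγ hφγ
  rw [← mulVec_mulVec, ← mulVec_mulVec, ← hφγ, hγ]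

lemma lin_map_eq (hD : ActsOnLatticeBy hΓ φ D) (γ : Γ) :
    (φ γ : Aff n).lin = D * (γ : Aff n).lin * D⁻¹ :=
  eq_mul_inv_iff_mul_eq.2 (Units.ext (lin_map_mul_eq hD γ))

lemma mem_holonomy_iff_conj_mem (hD : ActsOnLatticeBy hΓ φ D) (A : GL (Fin n) ℝ) :
    A ∈ holonomy Γ ↔ D * A * D⁻¹ ∈ holonomy Γ := by
  simp only [← coe_range_holonomyHom, SetLike.mem_coe, MonoidHom.mem_range]
  constructor
  · rintro ⟨γ, rfl⟩
    exact ⟨φ γ, lin_map_eq hD γ⟩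
  · rintro ⟨γ, hγ⟩
    have hlin := lin_map_eq hD (φ.symm γ)
    rw [φ.apply_symm_apply] at hlin
    exact ⟨φ.symm γ, mul_left_cancel (mul_right_cancel (hlin.symm.trans hγ))⟩

lemma exists_map_eq_conj (hF : (holonomy Γ).Finite) (hD : ActsOnLatticeBy hΓ φ D) :
    ∃ d : Fin n → ℝ, ∀ γ : Γ, (φ γ : Aff n) = ⟨d, D⟩ * γ * ⟨d, D⟩⁻¹ := by
  have := finiteIndex_translationSubgroup hF
  obtain ⟨d, hd⟩ := exists_eq_sub_of_cocycle (translationSubgroup Γ)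
    (fun γ => (mulVecLin ((φ γ : Aff n).lin : Matrix (Fin n) (Fin n) ℝ)).toAddMonoidHom)
    (fun γ => (φ γ : Aff n).tr - (D : Matrix (Fin n) (Fin n) ℝ) *ᵥ (γ : Aff n).tr)
    (fun γ₁ γ₂ => by
      simp only [map_mul, Subgroup.coe_mul, Aff.tr_mul, mulVec_add, mulVec_sub,
        mulVec_mulVec, lin_map_mul_eq hD, LinearMap.toAddMonoidHom_coe, mulVecLin_apply]
      abel)
    (fun γ hγ => by
      obtain ⟨z, rfl⟩ := exists_latticeTranslation_eq hΓ hγ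
      simp [hD z])
  refine ⟨d, fun γ => Aff.ext ?_ (lin_map_eq hD γ)⟩
  rw [Aff.tr_mul_mul_inv, sub_eq_iff_eq_add.1 (hd γ)]
  simp only [Aff.lin_mul, Aff.lin_inv, ← lin_map_eq hD γ, LinearMap.toAddMonoidHom_coe,
    mulVecLin_apply]
  abel

end LinearPart

end Automorphism

/-- Second Bieberbach theorem: every automorphism of a crystallographic group `Γ` is
conjugation by some `(d,D) ∈ Aff(ℝⁿ)`, where moreover `D ∈ GLₙ(ℤ)` and `D` normalises
the holonomy group `F` of `Γ`. -/
theorem stmt5 {n : ℕ} (Γ : Subgroup (Aff n)) (hΓ : IsCrystallographic Γ)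
    (φ : Γ ≃* Γ) :
    ∃ g : Aff n,
      (∀ γ : Γ, ((φ γ : Γ) : Aff n) = g * (γ : Aff n) * g⁻¹) ∧
      IsIntegralGL g.lin ∧
      (∀ A : GL (Fin n) ℝ, A ∈ holonomy Γ ↔ g.lin * A * g.lin⁻¹ ∈ holonomy Γ) := by
  obtain ⟨ψ, hψ⟩ := exists_addEquiv_map_latticeTranslation hΓ.1 hΓ.2.1 φ
  obtain ⟨D, hDint, hDψ⟩ := exists_isIntegralGL_mulVec_intCast ψ
  have hD : ActsOnLatticeBy hΓ.1 φ D := fun z => by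
    rw [hψ, hDψ]
    rfl
  obtain ⟨d, hd⟩ := exists_map_eq_conj hΓ.2.1 hD
  exact ⟨⟨d, D⟩, hd, hDint, mem_holonomy_iff_conj_mem hD⟩
end
end

section
/- Let Γ ≤ Aff(ℝⁿ) be an n-dimensional crystallographic group with holonomy group F, let (d,D) ∈ Aff(ℝⁿ), and suppose that the map ξ_{(d,D)} : γ ↦ (d,D) γ (d,D)⁻¹ is an automorphism of Γ. Then R(ξ_{(d,D)}) = ∞ if and only if there exists A ∈ F with det(Iₙ − AD) = 0. -/
open Matrix

noncomputable section

open Matrix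

section helpers
variable {n : ℕ}

lemma glcoe_inv_mul (u : GL (Fin n) ℝ) :
    ((u : Matrix (Fin n) (Fin n) ℝ))⁻¹ * (u : Matrix (Fin n) (Fin n) ℝ) = 1 := by
  rw [← Matrix.coe_units_inv, ← Units.val_mul, inv_mul_cancel]; rfl

lemma glcoe_mul_inv (u : GL (Fin n) ℝ) :
    (u : Matrix (Fin n) (Fin n) ℝ) * ((u : Matrix (Fin n) (Fin n) ℝ))⁻¹ = 1 := by
  rw [← Matrix.coe_units_inv, ← Units.val_mul, mul_inv_cancel]; rfl

lemma glcoe_inv_mul_cancel_left (u : GL (Fin n) ℝ) (X : Matrix (Fin n) (Fin n) ℝ) :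
    ((u : Matrix (Fin n) (Fin n) ℝ))⁻¹ * ((u : Matrix (Fin n) (Fin n) ℝ) * X) = X := by
  rw [← mul_assoc, glcoe_inv_mul, one_mul]

lemma glcoe_mul_inv_cancel_left (u : GL (Fin n) ℝ) (X : Matrix (Fin n) (Fin n) ℝ) :
    (u : Matrix (Fin n) (Fin n) ℝ) * (((u : Matrix (Fin n) (Fin n) ℝ))⁻¹ * X) = X := by
  rw [← mul_assoc, glcoe_mul_inv, one_mul]

lemma conj_formula (d c b : Fin n → ℝ) (D C A : GL (Fin n) ℝ) :
    (⟨c, C⟩ : Aff n) * ⟨b, A⟩ * ((⟨d, D⟩ : Aff n) * ⟨c, C⟩ * (⟨d, D⟩ : Aff n)⁻¹)⁻¹ =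
      ⟨c + (C : Matrix (Fin n) (Fin n) ℝ) *ᵥ b
         + ((C * A : GL (Fin n) ℝ) : Matrix (Fin n) (Fin n) ℝ) *ᵥ d
         - ((C * A * D * C⁻¹ : GL (Fin n) ℝ) : Matrix (Fin n) (Fin n) ℝ) *ᵥ c
         - ((C * A * D * C⁻¹ * D⁻¹ : GL (Fin n) ℝ) : Matrix (Fin n) (Fin n) ℝ) *ᵥ d,
        C * A * D * C⁻¹ * D⁻¹⟩ := by
  ext i
  · simp [Aff.mul_def, Aff.inv_def, Matrix.mulVec_add, Matrix.mulVec_neg, Units.val_mul,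
      Matrix.mulVec_mulVec, mul_assoc, glcoe_inv_mul_cancel_left, glcoe_mul_inv_cancel_left,
      glcoe_inv_mul, glcoe_mul_inv]
    ring
  · simp [Aff.mul_def, Aff.inv_def, mul_assoc]

end helpers
section helpers2
variable {n : ℕ}
open Matrix

lemma translation_mul (v a : Fin n → ℝ) (A : GL (Fin n) ℝ) :
    (⟨v, 1⟩ : Aff n) * ⟨a, A⟩ = ⟨v + a, A⟩ := by
  ext i <;> simp [Aff.mul_def]

lemma conj_translation (d v : Fin n → ℝ) (D : GL (Fin n) ℝ) :
    (⟨d, D⟩ : Aff n) * ⟨v, 1⟩ * (⟨d, D⟩ : Aff n)⁻¹ =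
      ⟨(D : Matrix (Fin n) (Fin n) ℝ) *ᵥ v, 1⟩ := by
  ext i
  · simp [Aff.mul_def, Aff.inv_def, Matrix.mulVec_add, Matrix.mulVec_neg,
      Matrix.mulVec_mulVec, Units.val_mul, glcoe_mul_inv]
  · simp [Aff.mul_def, Aff.inv_def, mul_assoc]

lemma mul_inv_same_lin (b a : Fin n → ℝ) (A : GL (Fin n) ℝ) :
    (⟨b, A⟩ : Aff n) * (⟨a, A⟩ : Aff n)⁻¹ = ⟨b - a, 1⟩ := by
  ext i
  · simp [Aff.mul_def, Aff.inv_def, Matrix.mulVec_neg, Matrix.mulVec_mulVec,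
      Units.val_mul, glcoe_mul_inv, sub_eq_add_neg]
  · simp [Aff.mul_def, Aff.inv_def]

lemma twistedConj_equivalence {G : Type*} [Group G] (φ : G →* G) :
    Equivalence (twistedConj φ) where
  refl g := ⟨1, by simp⟩
  symm := by
    rintro a b ⟨h, rfl⟩
    exact ⟨h⁻¹, by simp [mul_assoc]⟩
  trans := by
    rintro a b c ⟨h, rfl⟩ ⟨h', rfl⟩
    exact ⟨h * h', by simp [mul_assoc]⟩

lemma quot_mk_eq_iff {G : Type*} [Group G] (φ : G →* G) (a b : G) :
    Quot.mk (twistedConj φ) a = Quot.mk (twistedConj φ) b ↔ twistedConj φ a b := by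
  rw [Quot.eq, Equivalence.eqvGen_iff (twistedConj_equivalence φ)]

lemma cast_mulVec (M : Matrix (Fin n) (Fin n) ℤ) (v : Fin n → ℤ) :
    (M.map (Int.cast : ℤ → ℝ)) *ᵥ (fun i => (v i : ℝ)) = fun j => ((M *ᵥ v) j : ℝ) := by
  funext j
  simp [Matrix.mulVec, dotProduct, Matrix.map_apply]

lemma xi_coe {n : ℕ} (g : Aff n) (Γ : Subgroup (Aff n)) (hg : XiIsAut g Γ) (h : Γ) :
    ((xi g Γ hg h : Γ) : Aff n) = g * (h : Aff n) * g⁻¹ := rfl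

lemma twistedConj_xi_iff {n : ℕ} (g : Aff n) (Γ : Subgroup (Aff n)) (hg : XiIsAut g Γ)
    (x y : Γ) :
    twistedConj (xi g Γ hg) x y ↔
      ∃ h : Γ, (x : Aff n) = (h : Aff n) * (y : Aff n) * (g * (h : Aff n) * g⁻¹)⁻¹ := by
  constructor
  · rintro ⟨h, rfl⟩
    exact ⟨h, by simp [xi_coe]⟩
  · rintro ⟨h, hh⟩
    exact ⟨h, Subtype.ext (by simpa [xi_coe] using hh)⟩

end helpers2
open Matrix in
lemma infinite_quot {n : ℕ} (Γ : Subgroup (Aff n)) (hT : HasIntTranslations Γ)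
    (hF : (holonomy Γ).Finite) (g : Aff n) (hg : XiIsAut g Γ) (A : GL (Fin n) ℝ)
    (hA : A ∈ holonomy Γ)
    (hdet : ((1 : Matrix (Fin n) (Fin n) ℝ) -
      (A : Matrix (Fin n) (Fin n) ℝ) * (g.lin : Matrix (Fin n) (Fin n) ℝ)).det = 0) :
    Infinite (Quot (twistedConj (xi g Γ hg))) := by
  obtain ⟨d, D⟩ := g
  obtain ⟨a, ha⟩ := hA
  obtain ⟨w, hw0, hwM⟩ := Matrix.exists_vecMul_eq_zero_iff.mpr hdet
  obtain ⟨i, hwi⟩ := Function.ne_iff.mp hw0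
  have hmem : ∀ k : ℕ, Aff.mk (Pi.single i (k : ℝ) + a) A ∈ Γ := by
    intro k
    have h1 : Aff.mk (Pi.single i (k : ℝ)) 1 ∈ Γ := by
      refine (hT _).mpr ⟨Pi.single i (k : ℤ), ?_⟩
      funext j; by_cases hji : j = i <;> simp [Pi.single_apply, hji]
    have h2 := Γ.mul_mem h1 ha
    rwa [translation_mul] at h2
  set γ : ℕ → Γ := fun k => ⟨⟨Pi.single i (k : ℝ) + a, A⟩, hmem k⟩ with hγ
  by_contra hinf
  rw [not_infinite_iff_finite] at hinf
  obtain ⟨q, hq⟩ := Finite.exists_infinite_fiber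
    (fun k => Quot.mk _ (γ k) : ℕ → Quot (twistedConj (xi ⟨d, D⟩ Γ hg)))
  haveI := hq
  obtain ⟨⟨k₀, hk₀⟩⟩ := @Infinite.nonempty _ hq
  set b₀ : Fin n → ℝ := Pi.single i (k₀ : ℝ) + a with hb₀
  set G : GL (Fin n) ℝ → ℝ := fun C =>
    w ⬝ᵥ ((C : Matrix (Fin n) (Fin n) ℝ) *ᵥ b₀)
      + w ⬝ᵥ ((C : Matrix (Fin n) (Fin n) ℝ) *ᵥ ((A : Matrix (Fin n) (Fin n) ℝ) *ᵥ d))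
      - w ⬝ᵥ ((A : Matrix (Fin n) (Fin n) ℝ) *ᵥ d) - w ⬝ᵥ a with hG
  have key : ∀ k : ℕ, Quot.mk (twistedConj (xi ⟨d, D⟩ Γ hg)) (γ k) = q →
      ∃ C : GL (Fin n) ℝ, C ∈ holonomy Γ ∧ w i * (k : ℝ) = G C := by
    intro k hk
    have hqq : Quot.mk (twistedConj (xi ⟨d, D⟩ Γ hg)) (γ k) =
        Quot.mk (twistedConj (xi ⟨d, D⟩ Γ hg)) (γ k₀) := by
      rw [hk]; exact hk₀.symm
    rw [quot_mk_eq_iff, twistedConj_xi_iff] at hqq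
    obtain ⟨⟨⟨c, C⟩, hcC⟩, heq⟩ := hqq
    refine ⟨C, ⟨c, hcC⟩, ?_⟩
    simp only [hγ] at heq
    rw [conj_formula] at heq
    have h_lin : A = C * A * D * C⁻¹ * D⁻¹ := congrArg Aff.lin heq
    have h_tr : Pi.single i (k : ℝ) + a
        = c + (C : Matrix (Fin n) (Fin n) ℝ) *ᵥ b₀
          + ((C * A : GL (Fin n) ℝ) : Matrix (Fin n) (Fin n) ℝ) *ᵥ d
          - ((C * A * D * C⁻¹ : GL (Fin n) ℝ) : Matrix (Fin n) (Fin n) ℝ) *ᵥ c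
          - ((C * A * D * C⁻¹ * D⁻¹ : GL (Fin n) ℝ) : Matrix (Fin n) (Fin n) ℝ) *ᵥ d :=
      congrArg Aff.tr heq
    have h2 : C * A * D * C⁻¹ = A * D := (eq_mul_inv_iff_mul_eq.mp h_lin).symm
    have e1 : ((C * A * D * C⁻¹ : GL (Fin n) ℝ) : Matrix (Fin n) (Fin n) ℝ)
        = (A : Matrix (Fin n) (Fin n) ℝ) * (D : Matrix (Fin n) (Fin n) ℝ) := by
      rw [h2, Units.val_mul]
    have e2 : ((C * A * D * C⁻¹ * D⁻¹ : GL (Fin n) ℝ) : Matrix (Fin n) (Fin n) ℝ)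
        = (A : Matrix (Fin n) (Fin n) ℝ) := by rw [← h_lin]
    have e3 : ((C * A : GL (Fin n) ℝ) : Matrix (Fin n) (Fin n) ℝ) *ᵥ d
        = (C : Matrix (Fin n) (Fin n) ℝ) *ᵥ ((A : Matrix (Fin n) (Fin n) ℝ) *ᵥ d) := by
      rw [Units.val_mul, Matrix.mulVec_mulVec]
    rw [e1, e2, e3] at h_tr
    have hdot := congrArg (fun v => w ⬝ᵥ v) h_tr
    simp only [dotProduct_add, dotProduct_sub, dotProduct_single] at hdot
    have hzero : w ⬝ᵥ (((A : Matrix (Fin n) (Fin n) ℝ) * (D : Matrix (Fin n) (Fin n) ℝ)) *ᵥ c)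
        = w ⬝ᵥ c - 0 := by
      have h4 : w ⬝ᵥ c - w ⬝ᵥ (((A : Matrix (Fin n) (Fin n) ℝ) * (D : Matrix (Fin n) (Fin n) ℝ)) *ᵥ c)
          = w ⬝ᵥ (((1 : Matrix (Fin n) (Fin n) ℝ) -
            (A : Matrix (Fin n) (Fin n) ℝ) * (D : Matrix (Fin n) (Fin n) ℝ)) *ᵥ c) := by
        rw [Matrix.sub_mulVec, Matrix.one_mulVec, dotProduct_sub]
      have h5 := h4.trans (by rw [Matrix.dotProduct_mulVec, hwM, zero_dotProduct])
      linarith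
    simp only [hG]
    linarith [hdot, hzero]
  haveI : Finite ↥(holonomy Γ) := hF
  have hchoice : ∀ x : ↥((fun k => Quot.mk (twistedConj (xi ⟨d, D⟩ Γ hg)) (γ k)) ⁻¹' {q}),
      ∃ C : GL (Fin n) ℝ, C ∈ holonomy Γ ∧ w i * ((x : ℕ) : ℝ) = G C := fun x => key x x.2
  choose Φ hΦmem hΦeq using hchoice
  obtain ⟨x, y, hxy, hCeq⟩ := Finite.exists_ne_map_eq_of_infinite
    (fun x => (⟨Φ x, hΦmem x⟩ : ↥(holonomy Γ)))
  have : w i * ((x : ℕ) : ℝ) = w i * ((y : ℕ) : ℝ) := by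
    rw [hΦeq x, hΦeq y]
    exact congrArg G (congrArg Subtype.val hCeq)
  have hxyv : ((x : ℕ) : ℝ) = ((y : ℕ) : ℝ) := mul_left_cancel₀ hwi this
  exact hxy (Subtype.ext (Nat.cast_injective hxyv))
open Matrix in
lemma lin_integral {n : ℕ} (Γ : Subgroup (Aff n)) (hT : HasIntTranslations Γ)
    (g : Aff n) (hg : XiIsAut g Γ) :
    ∃ Dz : Matrix (Fin n) (Fin n) ℤ,
      Dz.map (Int.cast : ℤ → ℝ) = (g.lin : Matrix (Fin n) (Fin n) ℝ) := by
  obtain ⟨d, D⟩ := g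
  have col : ∀ j : Fin n, ∃ z : Fin n → ℤ,
      ((D : Matrix (Fin n) (Fin n) ℝ) *ᵥ Pi.single j 1) = fun i => (z i : ℝ) := by
    intro j
    have h1 : Aff.mk (Pi.single j (1 : ℝ)) 1 ∈ Γ := by
      refine (hT _).mpr ⟨Pi.single j (1 : ℤ), ?_⟩
      funext i; by_cases hij : i = j <;> simp [Pi.single_apply, hij]
    have h2 := (hg _).mp h1
    rw [conj_translation] at h2
    exact (hT _).mp h2
  choose z hz using col
  refine ⟨Matrix.of (fun i j => z j i), ?_⟩
  ext i j
  have := congrFun (hz j) i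
  rw [Matrix.mulVec_single] at this
  simpa using this.symm

open Matrix in
lemma finite_quot {n : ℕ} (Γ : Subgroup (Aff n)) (hΓ : IsCrystallographic Γ)
    (g : Aff n) (hg : XiIsAut g Γ)
    (hdet : ∀ A ∈ holonomy Γ, ((1 : Matrix (Fin n) (Fin n) ℝ) -
      (A : Matrix (Fin n) (Fin n) ℝ) * (g.lin : Matrix (Fin n) (Fin n) ℝ)).det ≠ 0) :
    Finite (Quot (twistedConj (xi g Γ hg))) := by
  obtain ⟨hT, hF, hInt⟩ := hΓ
  obtain ⟨Dz, hDz⟩ := lin_integral Γ hT g hg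
  obtain ⟨d, D⟩ := g
  haveI : Fintype ↥(holonomy Γ) := hF.fintype
  have hAz : ∀ A : ↥(holonomy Γ), ∀ i j, ∃ zz : ℤ,
      ((A : GL (Fin n) ℝ) : Matrix (Fin n) (Fin n) ℝ) i j = (zz : ℝ) :=
    fun A => (hInt A.1 A.2).1
  choose azf hazf using hAz
  set Az : ↥(holonomy Γ) → Matrix (Fin n) (Fin n) ℤ := fun A => Matrix.of (azf A) with hAzdef
  set Mz : ↥(holonomy Γ) → Matrix (Fin n) (Fin n) ℤ := fun A => 1 - Az A * Dz with hMzdef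
  have hD' : ∀ k j, (D : Matrix (Fin n) (Fin n) ℝ) k j = ((Dz k j : ℤ) : ℝ) := by
    intro k j; rw [← hDz]; rfl
  have hMcast : ∀ A : ↥(holonomy Γ), (Mz A).map (Int.cast : ℤ → ℝ)
      = (1 : Matrix (Fin n) (Fin n) ℝ)
        - ((A : GL (Fin n) ℝ) : Matrix (Fin n) (Fin n) ℝ) * (D : Matrix (Fin n) (Fin n) ℝ) := by
    intro A
    ext i j
    simp only [hMzdef, Matrix.map_apply, Matrix.sub_apply, Matrix.mul_apply, Matrix.one_apply,
      hazf, hD', hAzdef, Matrix.of_apply]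
    by_cases hij : i = j <;> simp [hij]
  have hdetz : ∀ A : ↥(holonomy Γ), (Mz A).det ≠ 0 := by
    intro A h0
    apply hdet A.1 A.2
    rw [← hMcast A]
    have hrfl : ((Mz A).map (Int.cast : ℤ → ℝ)) = (Int.castRingHom ℝ).mapMatrix (Mz A) := rfl
    rw [hrfl, ← RingHom.map_det, h0]
    simp
  set m : ℕ := ∏ A : ↥(holonomy Γ), (Mz A).det.natAbs with hm
  have hm0 : m ≠ 0 := by
    rw [hm]
    exact Finset.prod_ne_zero_iff.mpr fun A _ => Int.natAbs_ne_zero.mpr (hdetz A)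
  have hmdvd : ∀ A : ↥(holonomy Γ), (Mz A).det ∣ (m : ℤ) := by
    intro A
    rw [← Int.natAbs_dvd]
    exact_mod_cast Int.ofNat_dvd.mpr (Finset.dvd_prod_of_mem _ (Finset.mem_univ A))
  have hrepex : ∀ A : ↥(holonomy Γ), ∃ a : Fin n → ℝ, Aff.mk a A.1 ∈ Γ := fun A => A.2
  choose rep hrep using hrepex
  have hmemf : ∀ (A : ↥(holonomy Γ)) (x : Fin n → Fin m),
      Aff.mk ((fun j => (((x j : ℕ) : ℤ) : ℝ)) + rep A) A.1 ∈ Γ := by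
    intro A x
    have h1 : Aff.mk (fun j => (((x j : ℕ) : ℤ) : ℝ)) 1 ∈ Γ :=
      (hT _).mpr ⟨fun j => ((x j : ℕ) : ℤ), rfl⟩
    have h2 := Γ.mul_mem h1 (hrep A)
    rwa [translation_mul] at h2
  apply Finite.of_surjective
    (fun p : ↥(holonomy Γ) × (Fin n → Fin m) =>
      Quot.mk (twistedConj (xi ⟨d, D⟩ Γ hg))
        ⟨Aff.mk ((fun j => (((p.2 j : ℕ) : ℤ) : ℝ)) + rep p.1) p.1.1, hmemf p.1 p.2⟩)
  intro q
  obtain ⟨γ, rfl⟩ := Quot.exists_rep q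
  obtain ⟨⟨b, A⟩, hγ⟩ := γ
  have hA : A ∈ holonomy Γ := ⟨b, hγ⟩
  set As : ↥(holonomy Γ) := ⟨A, hA⟩ with hAs
  have hdiff : Aff.mk (b - rep As) 1 ∈ Γ := by
    have h2 := Γ.mul_mem hγ (Γ.inv_mem (hrep As))
    rwa [mul_inv_same_lin] at h2
  obtain ⟨z, hzeq⟩ := (hT _).mp hdiff
  have hmpos : (0 : ℤ) < (m : ℤ) := by exact_mod_cast Nat.pos_of_ne_zero hm0
  set x : Fin n → Fin m := fun j => ⟨(z j % (m : ℤ)).toNat, by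
    rw [Int.toNat_lt (Int.emod_nonneg _ (by exact_mod_cast hm0))]
    exact Int.emod_lt_of_pos _ hmpos⟩ with hx
  refine ⟨⟨As, x⟩, ?_⟩
  rw [quot_mk_eq_iff, twistedConj_xi_iff]
  set y : Fin n → ℤ := fun j => z j / (m : ℤ) with hy
  set cz : Fin n → ℤ := -(((m : ℤ) / (Mz As).det) • ((Mz As).adjugate *ᵥ y)) with hcz
  have hMc : (Mz As) *ᵥ cz = -((m : ℤ) • y) := by
    rw [hcz, Matrix.mulVec_neg, Matrix.mulVec_smul, Matrix.mulVec_mulVec, Matrix.mul_adjugate,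
      Matrix.smul_mulVec, Matrix.one_mulVec, smul_smul,
      Int.ediv_mul_cancel (hmdvd As)]
  have hcmem : Aff.mk (fun j => ((cz j : ℤ) : ℝ)) 1 ∈ Γ := (hT _).mpr ⟨cz, rfl⟩
  refine ⟨⟨Aff.mk (fun j => ((cz j : ℤ) : ℝ)) 1, hcmem⟩, ?_⟩
  show (Aff.mk ((fun j => (((x j : ℕ) : ℤ) : ℝ)) + rep As) A : Aff n)
      = Aff.mk (fun j => ((cz j : ℤ) : ℝ)) 1 * Aff.mk b A *
        ((Aff.mk d D : Aff n) * Aff.mk (fun j => ((cz j : ℤ) : ℝ)) 1 * (Aff.mk d D : Aff n)⁻¹)⁻¹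
  rw [conj_formula]
  have e0 : (1 : GL (Fin n) ℝ) * A * D * (1 : GL (Fin n) ℝ)⁻¹ * D⁻¹ = A := by
    rw [inv_one, one_mul, mul_one, mul_inv_cancel_right]
  have e1 : ((1 : GL (Fin n) ℝ) * A * D * (1 : GL (Fin n) ℝ)⁻¹ : GL (Fin n) ℝ) = A * D := by
    rw [inv_one, one_mul, mul_one]
  rw [e0, e1, Aff.mk.injEq]
  refine ⟨?_, rfl⟩
  have key : ∀ j, (((A * D : GL (Fin n) ℝ) : Matrix (Fin n) (Fin n) ℝ)
        *ᵥ (fun j' => ((cz j' : ℤ) : ℝ))) j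
      = ((cz j : ℤ) : ℝ) + (m : ℝ) * ((y j : ℤ) : ℝ) := by
    intro j
    have h1 : ((1 : Matrix (Fin n) (Fin n) ℝ)
          - ((A : GL (Fin n) ℝ) : Matrix (Fin n) (Fin n) ℝ) * (D : Matrix (Fin n) (Fin n) ℝ))
          *ᵥ (fun j' => ((cz j' : ℤ) : ℝ))
        = fun j' => ((((Mz As) *ᵥ cz) j' : ℤ) : ℝ) := by
      rw [← hMcast As]
      exact cast_mulVec (Mz As) cz
    have h2 := congrFun h1 j
    rw [Matrix.sub_mulVec, Matrix.one_mulVec, hMc] at h2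
    simp only [Pi.sub_apply, Pi.neg_apply, Pi.smul_apply, smul_eq_mul] at h2
    push_cast at h2
    rw [Units.val_mul]
    linarith [h2]
  funext j
  simp only [Pi.add_apply, Pi.sub_apply, key, Units.val_one, Matrix.one_mulVec, one_mul]
  have hbj : b j = rep As j + ((z j : ℤ) : ℝ) := by
    have := congrFun hzeq j
    simp only [Pi.sub_apply] at this
    linarith
  have hxz : ((x j : ℕ) : ℤ) = z j % (m : ℤ) := by
    rw [hx]
    exact Int.toNat_of_nonneg (Int.emod_nonneg _ (by exact_mod_cast hm0))
  have hzmy : (z j : ℝ) - (m : ℝ) * ((y j : ℤ) : ℝ) = (((x j : ℕ) : ℤ) : ℝ) := by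
    rw [hxz]
    have := Int.mul_ediv_add_emod (z j) (m : ℤ)
    have hcast : ((m : ℤ) : ℝ) * ((z j / (m : ℤ) : ℤ) : ℝ) + ((z j % (m : ℤ) : ℤ) : ℝ)
        = ((z j : ℤ) : ℝ) := by exact_mod_cast congrArg (Int.cast : ℤ → ℝ) this
    rw [hy]
    push_cast at hcast ⊢
    linarith
  rw [hbj]
  linarith [hzmy]

/-- For an automorphism `ξ_{(d,D)}` of a crystallographic group `Γ` with holonomy `F`:
`R(ξ_{(d,D)}) = ∞` iff `det(Iₙ - AD) = 0` for some `A ∈ F`. -/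
theorem stmt6 {n : ℕ} (Γ : Subgroup (Aff n)) (hΓ : IsCrystallographic Γ)
    (g : Aff n) (hg : XiIsAut g Γ) :
    reidemeisterNumber (xi g Γ hg) = ⊤ ↔
      ∃ A ∈ holonomy Γ,
        ((1 : Matrix (Fin n) (Fin n) ℝ) -
          (A : Matrix (Fin n) (Fin n) ℝ) * (g.lin : Matrix (Fin n) (Fin n) ℝ)).det = 0 := by
  constructor
  · intro htop
    by_contra hno
    push_neg at hno
    haveI := finite_quot Γ hΓ g hg hno
    rw [reidemeisterNumber] at htop
    revert htop
    simp [ENat.card_eq_coe_natCard]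
  · rintro ⟨A, hA, hdet⟩
    haveI := infinite_quot Γ hΓ.1 hΓ.2.1 g hg A hA hdet
    rw [reidemeisterNumber]
    exact ENat.card_eq_top_of_infinite
end
end

section
/- Let Γ ≤ Aff(ℝⁿ) be an n-dimensional crystallographic group. There exists a finite set Δ ⊆ ℝⁿ such that every automorphism φ of Γ whose restriction to the translation subgroup ℤⁿ is the identity (i.e. φ(z,Iₙ) = (z,Iₙ) for all z ∈ ℤⁿ) can be written as φ = ξ_{(t,Iₙ)} ∘ ξ_{(d,Iₙ)} for some t ∈ ℤⁿ and some d ∈ Δ for which ξ_{(d,Iₙ)} is an automorphism of Γ; here ξ_{(t,Iₙ)} is the inner automorphism given by conjugation by the translation (t,Iₙ) ∈ Γ. -/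
open Matrix

noncomputable section

namespace AffAux

variable {n : ℕ}

local notation "M" => Matrix (Fin n) (Fin n) ℝ

theorem lin_mul (a b : Aff n) : (a * b).lin = a.lin * b.lin := rfl
theorem tr_mul (a b : Aff n) : (a * b).tr = a.tr + ((a.lin : M)) *ᵥ b.tr := rfl

theorem T_mul (u v : Fin n → ℝ) : Aff.mk u 1 * Aff.mk v 1 = Aff.mk (u + v) (1 : GL (Fin n) ℝ) := by
  ext i <;> simp [Aff.mul_def]

theorem T_inv (v : Fin n → ℝ) : (Aff.mk v (1 : GL (Fin n) ℝ))⁻¹ = Aff.mk (-v) 1 := by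
  ext i <;> simp [Aff.inv_def]

theorem eq_T_of_lin_eq_one (a : Aff n) (h : a.lin = 1) : a = Aff.mk a.tr 1 := by
  ext i
  · rfl
  · rw [h]

theorem conj_T (g : Aff n) (v : Fin n → ℝ) :
    g * Aff.mk v 1 * g⁻¹ = Aff.mk ((g.lin : M) *ᵥ v) 1 := by
  have h1 : (g.lin : M) * ((g.lin : M))⁻¹ = 1 :=
    Matrix.mul_nonsing_inv _ ((Matrix.isUnit_iff_isUnit_det _).mp g.lin.isUnit)
  ext i
  · simp [Aff.mul_def, Aff.inv_def, Matrix.mulVec_add, Matrix.mulVec_mulVec, mul_one,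
      Matrix.mulVec_neg, h1]
  · simp [Aff.mul_def, Aff.inv_def]

theorem T_conj (c : Fin n → ℝ) (g : Aff n) :
    Aff.mk c 1 * g * (Aff.mk c 1)⁻¹ = Aff.mk (g.tr + (c - (g.lin : M) *ᵥ c)) g.lin := by
  rw [T_inv]
  ext i
  · simp [Aff.mul_def, Matrix.mulVec_add, Matrix.mulVec_neg]
    ring
  · simp [Aff.mul_def]

end AffAux

namespace AffAux

variable {n : ℕ}

theorem mul_inv_eq_T (a : Aff n) (v : Fin n → ℝ) :
    Aff.mk (a.tr + v) a.lin * a⁻¹ = Aff.mk v 1 := by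
  have h1 : (a.lin : Matrix (Fin n) (Fin n) ℝ) * ((a.lin : Matrix (Fin n) (Fin n) ℝ))⁻¹ = 1 :=
    Matrix.mul_nonsing_inv _ ((Matrix.isUnit_iff_isUnit_det _).mp a.lin.isUnit)
  ext i
  · simp [Aff.mul_def, Aff.inv_def, Matrix.mulVec_mulVec, Matrix.mulVec_neg, h1]
  · simp [Aff.mul_def, Aff.inv_def]

theorem mulVec_real_smul (A : Matrix (Fin n) (Fin n) ℝ) (r : ℝ) (v : Fin n → ℝ) :
    A *ᵥ (r • v) = r • (A *ᵥ v) := by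
  funext i
  simp [Matrix.mulVec, dotProduct, Finset.mul_sum, mul_left_comm]

end AffAux

open AffAux

/-- There is a finite set `Δ ⊆ ℝⁿ` such that every automorphism of the crystallographic
group `Γ` restricting to the identity on the translation subgroup `ℤⁿ` is the composition
of an inner automorphism `ξ_{(t,Iₙ)}`, `t ∈ ℤⁿ`, with some automorphism `ξ_{(d,Iₙ)}`,
`d ∈ Δ`. -/
theorem stmt8 {n : ℕ} (Γ : Subgroup (Aff n)) (hΓ : IsCrystallographic Γ) :
    ∃ Δ : Set (Fin n → ℝ), Δ.Finite ∧
      ∀ φ : Γ ≃* Γ, (∀ γ : Γ, (γ : Aff n).lin = 1 → φ γ = γ) →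
        ∃ t : Fin n → ℤ, ∃ d ∈ Δ,
          Aff.mk (fun i => (t i : ℝ)) 1 ∈ Γ ∧
          XiIsAut (Aff.mk d 1) Γ ∧
          ∀ γ : Γ, ((φ γ : Γ) : Aff n) =
            Aff.mk (fun i => (t i : ℝ)) 1 *
              (Aff.mk d 1 * (γ : Aff n) * (Aff.mk d 1)⁻¹) *
              (Aff.mk (fun i => (t i : ℝ)) 1)⁻¹ := by
    classical
  obtain ⟨hInt, hFin, -⟩ := hΓ
  set Fs : Finset (GL (Fin n) ℝ) := hFin.toFinset with hFsdef
  set N : ℕ := Fs.card with hNdef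
  have hmemFs : ∀ D : GL (Fin n) ℝ, D ∈ Fs ↔ D ∈ holonomy Γ := fun D => hFin.mem_toFinset
  have hone : (1 : GL (Fin n) ℝ) ∈ holonomy Γ :=
    ⟨0, by rw [← Aff.one_def]; exact Γ.one_mem⟩
  have hNpos : 0 < N := Finset.card_pos.mpr ⟨1, (hmemFs 1).mpr hone⟩
  have hNR : (N : ℝ) ≠ 0 := Nat.cast_ne_zero.mpr hNpos.ne'
  refine ⟨Set.range (fun k : Fin n → Fin N => fun i => ((k i : ℕ) : ℝ) / (N : ℝ)),
    Set.finite_range _, ?_⟩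
  intro φ hφ
  have hT : ∀ z : Fin n → ℤ, Aff.mk (fun i => (z i : ℝ)) 1 ∈ Γ := fun z => (hInt _).mpr ⟨z, rfl⟩
  have hmul : ∀ {D E : GL (Fin n) ℝ}, D ∈ holonomy Γ → E ∈ holonomy Γ →
      D * E ∈ holonomy Γ := by
    rintro D E ⟨a, ha⟩ ⟨b, hb⟩
    have h := Γ.mul_mem ha hb
    rw [Aff.mul_def] at h
    exact ⟨_, h⟩
  have hinv : ∀ {D : GL (Fin n) ℝ}, D ∈ holonomy Γ → D⁻¹ ∈ holonomy Γ := by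
    rintro D ⟨a, ha⟩
    have h := Γ.inv_mem ha
    rw [Aff.inv_def] at h
    exact ⟨_, h⟩
  -- the linear part is preserved by φ
  have hlin : ∀ γ : Γ, ((φ γ : Γ) : Aff n).lin = ((γ : Γ) : Aff n).lin := by
    intro γ
    have key : ∀ z : Fin n → ℤ,
        ((((φ γ : Γ) : Aff n)).lin : Matrix (Fin n) (Fin n) ℝ) *ᵥ (fun i => (z i : ℝ))
          = (((γ : Γ) : Aff n).lin : Matrix (Fin n) (Fin n) ℝ) *ᵥ (fun i => (z i : ℝ)) := by
      intro z
      set τ : Γ := ⟨Aff.mk (fun i => (z i : ℝ)) 1, hT z⟩ with hτ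
      have hτcoe : (τ : Aff n) = Aff.mk (fun i => (z i : ℝ)) 1 := rfl
      have hτlin : ((γ * τ * γ⁻¹ : Γ) : Aff n)
          = Aff.mk ((((γ : Γ) : Aff n).lin : Matrix (Fin n) (Fin n) ℝ) *ᵥ fun i => (z i : ℝ)) 1 := by
        show ((γ : Γ) : Aff n) * (Aff.mk (fun i => (z i : ℝ)) 1) * ((γ : Γ) : Aff n)⁻¹ = _
        exact conj_T _ _
      have h2 : φ (γ * τ * γ⁻¹) = γ * τ * γ⁻¹ := hφ _ (by rw [hτlin])
      have h3 : φ (γ * τ * γ⁻¹) = φ γ * τ * (φ γ)⁻¹ := by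
        rw [_root_.map_mul, _root_.map_mul, map_inv, hφ τ rfl]
      have h5 : (φ γ * τ * (φ γ)⁻¹ : Γ) = (γ * τ * γ⁻¹ : Γ) := by rw [← h3, h2]
      have h6 := congrArg (Subtype.val) h5
      simp only [MulMemClass.coe_mul, InvMemClass.coe_inv, hτcoe] at h6
      rw [conj_T, conj_T] at h6
      exact congrArg Aff.tr h6
    have key2 : ∀ j i, ((((φ γ : Γ) : Aff n)).lin : Matrix (Fin n) (Fin n) ℝ) i j
        = (((γ : Γ) : Aff n).lin : Matrix (Fin n) (Fin n) ℝ) i j := by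
      intro j i
      have h := congrFun (key (fun k => if k = j then 1 else 0)) i
      simpa [Matrix.mulVec, dotProduct, mul_ite, mul_one, mul_zero,
        Finset.sum_ite_eq', apply_ite ((↑·) : ℤ → ℝ)] using h
    exact Units.ext (by ext i j; exact key2 j i)
  -- the translational defect
  set dlt : Γ → (Fin n → ℝ) := fun γ => ((φ γ : Γ) : Aff n).tr - ((γ : Γ) : Aff n).tr with hdlt
  have hφval : ∀ γ : Γ, ((φ γ : Γ) : Aff n)
      = Aff.mk (((γ : Γ) : Aff n).tr + dlt γ) (((γ : Γ) : Aff n).lin) := by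
    intro γ
    refine Aff.ext ?_ ?_
    · funext i
      simp [hdlt]
    · exact hlin γ
  have hdint : ∀ γ : Γ, ∃ z : Fin n → ℤ, dlt γ = fun i => (z i : ℝ) := by
    intro γ
    have hmem : ((φ γ * γ⁻¹ : Γ) : Aff n) ∈ Γ := (φ γ * γ⁻¹ : Γ).2
    have hval : ((φ γ * γ⁻¹ : Γ) : Aff n) = Aff.mk (dlt γ) 1 := by
      show ((φ γ : Γ) : Aff n) * ((γ : Γ) : Aff n)⁻¹ = _
      rw [hφval γ]
      exact mul_inv_eq_T _ _
    rw [hval] at hmem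
    exact (hInt _).mp hmem
  have hcoc : ∀ γ₁ γ₂ : Γ, dlt (γ₁ * γ₂)
      = dlt γ₁ + ((((γ₁ : Γ) : Aff n)).lin : Matrix (Fin n) (Fin n) ℝ) *ᵥ dlt γ₂ := by
    intro γ₁ γ₂
    have e1 : ((φ (γ₁ * γ₂) : Γ) : Aff n).tr
        = ((φ γ₁ : Γ) : Aff n).tr
          + ((((φ γ₁ : Γ) : Aff n)).lin : Matrix (Fin n) (Fin n) ℝ) *ᵥ ((φ γ₂ : Γ) : Aff n).tr := by
      rw [_root_.map_mul]; rfl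
    have e2 : ((γ₁ * γ₂ : Γ) : Aff n).tr
        = ((γ₁ : Γ) : Aff n).tr
          + ((((γ₁ : Γ) : Aff n)).lin : Matrix (Fin n) (Fin n) ℝ) *ᵥ ((γ₂ : Γ) : Aff n).tr := rfl
    simp only [hdlt, e1, e2, hlin γ₁, Matrix.mulVec_sub]
    abel
  have hd1 : ∀ w : Γ, ((w : Γ) : Aff n).lin = 1 → dlt w = 0 := by
    intro w hw
    simp [hdlt, hφ w hw]
  have hwd : ∀ γ γ' : Γ, ((γ : Γ) : Aff n).lin = ((γ' : Γ) : Aff n).lin → dlt γ = dlt γ' := by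
    intro γ γ' h
    have hw : ((γ⁻¹ * γ' : Γ) : Aff n).lin = 1 := by
      show (((γ : Γ) : Aff n)⁻¹ * ((γ' : Γ) : Aff n)).lin = 1
      rw [show (((γ : Γ) : Aff n)⁻¹ * ((γ' : Γ) : Aff n)).lin
        = (((γ : Γ) : Aff n).lin)⁻¹ * ((γ' : Γ) : Aff n).lin from rfl, ← h, inv_mul_cancel]
    have h2 := hcoc γ (γ⁻¹ * γ')
    rw [hd1 _ hw, Matrix.mulVec_zero, add_zero, mul_inv_cancel_left] at h2
    exact h2.symm
  -- δ as a function of the holonomy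
  set δf : GL (Fin n) ℝ → (Fin n → ℝ) := fun D =>
    if h : ∃ γ : Γ, ((γ : Γ) : Aff n).lin = D then dlt h.choose else 0 with hδf
  have hδf_eq : ∀ γ : Γ, δf (((γ : Γ) : Aff n).lin) = dlt γ := by
    intro γ
    have hex : ∃ γ' : Γ, ((γ' : Γ) : Aff n).lin = ((γ : Γ) : Aff n).lin := ⟨γ, rfl⟩
    simp only [hδf, dif_pos hex]
    exact hwd _ _ hex.choose_spec
  have hδf_hol : ∀ D ∈ holonomy Γ, ∃ γ : Γ, ((γ : Γ) : Aff n).lin = D ∧ δf D = dlt γ := by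
    rintro D ⟨a, ha⟩
    exact ⟨⟨Aff.mk a D, ha⟩, rfl, by rw [← hδf_eq ⟨Aff.mk a D, ha⟩]⟩
  have hδf_mul : ∀ D ∈ holonomy Γ, ∀ E ∈ holonomy Γ,
      δf (D * E) = δf D + (D : Matrix (Fin n) (Fin n) ℝ) *ᵥ δf E := by
    intro D hD E hE
    obtain ⟨γ₁, h1, e1⟩ := hδf_hol D hD
    obtain ⟨γ₂, h2, e2⟩ := hδf_hol E hE
    have h12 : ((γ₁ * γ₂ : Γ) : Aff n).lin = D * E := by
      show ((γ₁ : Γ) : Aff n).lin * ((γ₂ : Γ) : Aff n).lin = D * E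
      rw [h1, h2]
    rw [← h12, hδf_eq, hcoc, e1, e2, h1]
  have hδf_int : ∀ D ∈ Fs, ∃ z : Fin n → ℤ, δf D = fun i => (z i : ℝ) := by
    intro D hD
    obtain ⟨γ, -, e⟩ := hδf_hol D ((hmemFs D).mp hD)
    rw [e]
    exact hdint γ
  choose! Z hZ using hδf_int
  set s : Fin n → ℝ := ∑ E ∈ Fs, δf E with hs
  set zs : Fin n → ℤ := fun i => ∑ E ∈ Fs, Z E i with hzs
  have hs_int : ∀ i, s i = (zs i : ℝ) := by
    intro i
    rw [hs, hzs]
    push_cast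
    rw [Finset.sum_apply]
    exact Finset.sum_congr rfl fun E hE => by rw [hZ E hE]
  have hreindex : ∀ D ∈ holonomy Γ, ∑ E ∈ Fs, δf (D * E) = s := by
    intro D hD
    rw [hs]
    refine Finset.sum_nbij' (i := fun E => D * E) (j := fun E => D⁻¹ * E) ?_ ?_ ?_ ?_ ?_
    · intro E hE
      exact (hmemFs _).mpr (hmul hD ((hmemFs E).mp hE))
    · intro E hE
      exact (hmemFs _).mpr (hmul (hinv hD) ((hmemFs E).mp hE))
    · intro E hE
      group
    · intro E hE
      group
    · intro E hE
      rfl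
  have hkey : ∀ D ∈ holonomy Γ, (N : ℝ) • δf D = s - (D : Matrix (Fin n) (Fin n) ℝ) *ᵥ s := by
    intro D hD
    have h1 : ∑ E ∈ Fs, δf (D * E)
        = ∑ E ∈ Fs, (δf D + (D : Matrix (Fin n) (Fin n) ℝ) *ᵥ δf E) :=
      Finset.sum_congr rfl fun E hE => hδf_mul D hD E ((hmemFs E).mp hE)
    rw [hreindex D hD, Finset.sum_add_distrib, Finset.sum_const] at h1
    have h2 : (D : Matrix (Fin n) (Fin n) ℝ) *ᵥ s = ∑ E ∈ Fs, (D : Matrix (Fin n) (Fin n) ℝ) *ᵥ δf E := by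
      rw [hs, ← Matrix.mulVecLin_apply, map_sum]
      simp [Matrix.mulVecLin_apply]
    rw [← h2, ← hNdef] at h1
    rw [Nat.cast_smul_eq_nsmul, eq_sub_iff_add_eq]
    exact h1.symm
  set c : Fin n → ℝ := ((N : ℝ))⁻¹ • s with hc
  have hδc : ∀ D ∈ holonomy Γ, δf D = c - (D : Matrix (Fin n) (Fin n) ℝ) *ᵥ c := by
    intro D hD
    rw [hc, mulVec_real_smul, ← smul_sub, ← hkey D hD, smul_smul, inv_mul_cancel₀ hNR, one_smul]
  have hci : ∀ i, c i = (zs i : ℝ) / (N : ℝ) := by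
    intro i
    rw [hc, Pi.smul_apply, hs_int i, smul_eq_mul, div_eq_inv_mul]
  set t : Fin n → ℤ := fun i => zs i / (N : ℤ) with ht
  set d : Fin n → ℝ := fun i => ((zs i % (N : ℤ) : ℤ) : ℝ) / (N : ℝ) with hd
  have hctd : ∀ i, (t i : ℝ) + d i = c i := by
    intro i
    rw [hci i, ht, hd]
    have h : (N : ℤ) * (zs i / (N : ℤ)) + zs i % (N : ℤ) = zs i := Int.mul_ediv_add_emod _ _
    have h2 : ((zs i : ℤ) : ℝ) = (N : ℝ) * ((zs i / (N : ℤ) : ℤ) : ℝ) + ((zs i % (N : ℤ) : ℤ) : ℝ) := by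
      exact_mod_cast h.symm
    rw [h2, add_div, mul_div_cancel_left₀ _ hNR]
  have hd_mem : d ∈ Set.range (fun k : Fin n → Fin N => fun i => ((k i : ℕ) : ℝ) / (N : ℝ)) := by
    have h1 : ∀ i, 0 ≤ zs i % (N : ℤ) := fun i =>
      Int.emod_nonneg _ (by exact_mod_cast hNpos.ne')
    have h2 : ∀ i, zs i % (N : ℤ) < (N : ℤ) := fun i =>
      Int.emod_lt_of_pos _ (by exact_mod_cast hNpos)
    refine ⟨fun i => ⟨(zs i % (N : ℤ)).toNat, ?_⟩, ?_⟩
    · have := h1 i; have := h2 i; omega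
    · funext i
      show (((zs i % (N : ℤ)).toNat : ℕ) : ℝ) / (N : ℝ) = d i
      rw [hd]
      congr 1
      exact_mod_cast congrArg (fun x : ℤ => (x : ℝ)) (Int.toNat_of_nonneg (h1 i))
  -- the conjugation formula
  have hholγ : ∀ γ : Γ, ((γ : Γ) : Aff n).lin ∈ holonomy Γ := by
    intro γ
    exact ⟨((γ : Γ) : Aff n).tr, γ.2⟩
  have hconj : ∀ γ : Γ, ((φ γ : Γ) : Aff n)
      = Aff.mk c 1 * ((γ : Γ) : Aff n) * (Aff.mk c 1)⁻¹ := by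
    intro γ
    rw [T_conj, hφval γ, ← hδf_eq γ, hδc _ (hholγ γ)]
  have hTtd : Aff.mk (fun i => (t i : ℝ)) 1 * Aff.mk d 1 = Aff.mk c 1 := by
    rw [T_mul]
    congr 1
    funext i
    exact hctd i
  have hTd_eq : Aff.mk d 1 = (Aff.mk (fun i => (t i : ℝ)) 1)⁻¹ * Aff.mk c 1 := by
    rw [← hTtd]
    group
  have hxi : XiIsAut (Aff.mk d 1) Γ := by
    intro γ
    constructor
    · intro hγ
      have h1 : Aff.mk c 1 * γ * (Aff.mk c 1)⁻¹ ∈ Γ := by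
        rw [← hconj ⟨γ, hγ⟩]
        exact (φ ⟨γ, hγ⟩).2
      have e : Aff.mk d 1 * γ * (Aff.mk d 1)⁻¹
          = (Aff.mk (fun i => (t i : ℝ)) 1)⁻¹ * (Aff.mk c 1 * γ * (Aff.mk c 1)⁻¹)
            * Aff.mk (fun i => (t i : ℝ)) 1 := by
        rw [hTd_eq]
        group
      rw [e]
      exact Γ.mul_mem (Γ.mul_mem (Γ.inv_mem (hT t)) h1) (hT t)
    · intro hγ
      have h1 : Aff.mk c 1 * γ * (Aff.mk c 1)⁻¹ ∈ Γ := by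
        have e : Aff.mk c 1 * γ * (Aff.mk c 1)⁻¹
            = Aff.mk (fun i => (t i : ℝ)) 1 * (Aff.mk d 1 * γ * (Aff.mk d 1)⁻¹)
              * (Aff.mk (fun i => (t i : ℝ)) 1)⁻¹ := by
          rw [hTd_eq]
          group
        rw [e]
        exact Γ.mul_mem (Γ.mul_mem (hT t) hγ) (Γ.inv_mem (hT t))
      obtain ⟨α, hα⟩ := φ.surjective ⟨_, h1⟩
      have h2 := hconj α
      rw [hα] at h2
      have h3 : Aff.mk c 1 * γ * (Aff.mk c 1)⁻¹
          = Aff.mk c 1 * ((α : Γ) : Aff n) * (Aff.mk c 1)⁻¹ := h2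
      have h4 : ((α : Γ) : Aff n) = γ := mul_left_cancel (mul_right_cancel h3).symm
      rw [← h4]
      exact α.2
  refine ⟨t, d, hd_mem, hT t, hxi, ?_⟩
  intro γ
  rw [hconj γ, hTd_eq]
  group
end
end

section
/- Let Γ ≤ Aff(ℝⁿ) be an n-dimensional crystallographic group. There exists a finite set Δ ⊆ ℝⁿ such that for all automorphisms φ, ψ of Γ whose restrictions to the translation subgroup ℤⁿ coincide, there exist d ∈ Δ with ξ_{(d,Iₙ)} an automorphism of Γ and an inner automorphism ι of Γ such that ψ = ι ∘ ξ_{(d,Iₙ)} ∘ φ. -/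
open Matrix

noncomputable section

section CrystAux

open Matrix

variable {n : ℕ}

namespace CrystAux

theorem lin_mul (a b : Aff n) : (a * b).lin = a.lin * b.lin := rfl

theorem tr_mul (a b : Aff n) :
    (a * b).tr = a.tr + (a.lin : Matrix (Fin n) (Fin n) ℝ) *ᵥ b.tr := rfl

theorem inv_one_lin : (((1 : GL (Fin n) ℝ)⁻¹ : GL (Fin n) ℝ) : Matrix (Fin n) (Fin n) ℝ) = 1 := by
  simp

theorem trans_mul (v w : Fin n → ℝ) :
    (Aff.mk v 1 : Aff n) * Aff.mk w 1 = Aff.mk (v + w) 1 := by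
  ext i <;> simp [Aff.mul_def]

theorem trans_inv (v : Fin n → ℝ) :
    (Aff.mk v 1 : Aff n)⁻¹ = Aff.mk (-v) 1 := by
  ext i <;> simp [Aff.inv_def]

theorem mk_eta (a : Aff n) : Aff.mk a.tr a.lin = a := rfl

/-- Conjugation of an affine element by a pure translation. -/
theorem conj_by_trans (e a : Fin n → ℝ) (D : GL (Fin n) ℝ) :
    Aff.mk e 1 * Aff.mk a D * (Aff.mk e 1)⁻¹ =
      Aff.mk (a + e - (D : Matrix (Fin n) (Fin n) ℝ) *ᵥ e) D := by
  rw [trans_inv]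
  ext i
  · simp [Aff.mul_def, Matrix.mulVec_neg]
    ring
  · simp [Aff.mul_def]

theorem mul_matinv (D : GL (Fin n) ℝ) :
    (D : Matrix (Fin n) (Fin n) ℝ) * (↑(D⁻¹) : Matrix (Fin n) (Fin n) ℝ) = 1 := by
  rw [← Units.val_mul]; simp

theorem matinv_mul (D : GL (Fin n) ℝ) :
    (↑(D⁻¹) : Matrix (Fin n) (Fin n) ℝ) * (D : Matrix (Fin n) (Fin n) ℝ) = 1 := by
  rw [← Units.val_mul]; simp

theorem mul_matinv' (D : GL (Fin n) ℝ) :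
    (D : Matrix (Fin n) (Fin n) ℝ) * (D : Matrix (Fin n) (Fin n) ℝ)⁻¹ = 1 := by
  rw [← Matrix.coe_units_inv]; exact mul_matinv D

theorem matinv_mul' (D : GL (Fin n) ℝ) :
    (D : Matrix (Fin n) (Fin n) ℝ)⁻¹ * (D : Matrix (Fin n) (Fin n) ℝ) = 1 := by
  rw [← Matrix.coe_units_inv]; exact matinv_mul D

/-- Conjugation of a pure translation by an affine element. -/
theorem conj_trans (g : Aff n) (v : Fin n → ℝ) :
    g * Aff.mk v 1 * g⁻¹ =
      Aff.mk ((g.lin : Matrix (Fin n) (Fin n) ℝ) *ᵥ v) 1 := by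
  ext i
  · simp [Aff.mul_def, Aff.inv_def, Matrix.mulVec_add, Matrix.mulVec_mulVec,
      Matrix.mulVec_neg, mul_matinv, mul_matinv', matinv_mul, matinv_mul']
  · simp [Aff.mul_def, Aff.inv_def]

variable (Γ : Subgroup (Aff n))

theorem one_mem_hol : (1 : GL (Fin n) ℝ) ∈ holonomy Γ :=
  ⟨0, by rw [← Aff.one_def]; exact Γ.one_mem⟩

theorem mul_mem_hol {D E : GL (Fin n) ℝ} (hD : D ∈ holonomy Γ) (hE : E ∈ holonomy Γ) :
    D * E ∈ holonomy Γ := by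
  obtain ⟨a, ha⟩ := hD; obtain ⟨b, hb⟩ := hE
  exact ⟨a + (D : Matrix (Fin n) (Fin n) ℝ) *ᵥ b, Γ.mul_mem ha hb⟩

theorem inv_mem_hol {D : GL (Fin n) ℝ} (hD : D ∈ holonomy Γ) : D⁻¹ ∈ holonomy Γ := by
  obtain ⟨a, ha⟩ := hD
  exact ⟨(↑(D⁻¹) : Matrix (Fin n) (Fin n) ℝ) *ᵥ (-a), Γ.inv_mem ha⟩

/-- The holonomy, as a subgroup of `GL`. -/
def holSub : Subgroup (GL (Fin n) ℝ) where
  carrier := holonomy Γ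
  one_mem' := one_mem_hol Γ
  mul_mem' := mul_mem_hol Γ
  inv_mem' := inv_mem_hol Γ

theorem pow_hol (hFin : (holonomy Γ).Finite) {D : GL (Fin n) ℝ} (hD : D ∈ holonomy Γ) :
    D ^ Nat.card (holonomy Γ) = 1 := by
  haveI : Finite (holonomy Γ) := hFin.to_subtype
  have : (⟨D, hD⟩ : holSub Γ) ^ Nat.card (holSub Γ) = 1 := pow_card_eq_one'
  have h2 : Nat.card (holSub Γ) = Nat.card (holonomy Γ) := rfl
  rw [h2] at this
  simpa using congrArg (Subtype.val) this

theorem mulVec_apply' {R : Type*} [CommRing R] (M : Matrix (Fin n) (Fin n) R) (x : Fin n → R)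
    (i : Fin n) : (M *ᵥ x) i = ∑ j, M i j * x j := rfl

theorem mul_inv_same_lin (a b : Aff n) (h : a.lin = b.lin) :
    a * b⁻¹ = Aff.mk (a.tr - b.tr) 1 := by
  have hl : (a * b⁻¹).lin = 1 := by
    show a.lin * b.lin⁻¹ = 1
    rw [h, mul_inv_cancel]
  have ht : (a * b⁻¹).tr = a.tr - b.tr := by
    show a.tr + (a.lin : Matrix (Fin n) (Fin n) ℝ) *ᵥ
        ((↑(b.lin⁻¹) : Matrix (Fin n) (Fin n) ℝ) *ᵥ (-b.tr)) = _
    rw [Matrix.mulVec_mulVec, h, mul_matinv, Matrix.one_mulVec]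
    funext i
    simp [sub_eq_add_neg]
  calc a * b⁻¹ = Aff.mk (a * b⁻¹).tr (a * b⁻¹).lin := (mk_eta _).symm
    _ = _ := by rw [hl, ht]

theorem mulVec_single_cast (M : Matrix (Fin n) (Fin n) ℝ) (j i : Fin n) :
    (M *ᵥ (fun i => (((Pi.single j 1 : Fin n → ℤ)) i : ℝ))) i = M i j := by
  rw [mulVec_apply']
  rw [Finset.sum_eq_single j]
  · simp
  · intro k _ hk
    simp [Pi.single_apply, hk]
  · intro h
    exact absurd (Finset.mem_univ j) h

theorem trans_pow (v : Fin n → ℝ) (m : ℕ) :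
    (Aff.mk v 1 : Aff n) ^ m = Aff.mk (m • v) 1 := by
  induction m with
  | zero => ext i <;> simp [Aff.one_def]
  | succ m ih => rw [pow_succ, ih, trans_mul, succ_nsmul]

theorem trans_comm {a bb : Aff n} (ha : a.lin = 1) (hb : bb.lin = 1) : a * bb = bb * a := by
  have ea : a = Aff.mk a.tr 1 := by rw [← ha]
  have eb : bb = Aff.mk bb.tr 1 := by rw [← hb]
  rw [ea, eb, trans_mul, trans_mul, add_comm]

theorem lin_pow (a : Aff n) (j : ℕ) : (a ^ j).lin = a.lin ^ j := by
  induction j with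
  | zero => rfl
  | succ j ih => rw [pow_succ, pow_succ, lin_mul, ih]

theorem memhol (x : Γ) : ((x : Aff n)).lin ∈ holonomy Γ :=
  ⟨(x : Aff n).tr, by rw [mk_eta]; exact x.2⟩

section T

variable (hT : HasIntTranslations Γ)

/-- The translation `(z, Iₙ)` as an element of `Γ`. -/
def tG (z : Fin n → ℤ) : Γ := ⟨Aff.mk (fun i => (z i : ℝ)) 1, (hT _).mpr ⟨z, rfl⟩⟩

theorem tG_lin (z : Fin n → ℤ) : ((tG Γ hT z : Γ) : Aff n).lin = 1 := rfl

theorem tG_add (z w : Fin n → ℤ) : tG Γ hT (z + w) = tG Γ hT z * tG Γ hT w := by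
  apply Subtype.ext
  show Aff.mk _ 1 = Aff.mk (fun i => (z i : ℝ)) 1 * Aff.mk (fun i => (w i : ℝ)) 1
  rw [trans_mul]
  ext i
  · show (((z + w) i : ℤ) : ℝ) = (z i : ℝ) + (w i : ℝ)
    rw [Pi.add_apply]; push_cast; ring
  · rfl

theorem aut_trans (hΓ : IsCrystallographic Γ) (φ : Γ ≃* Γ) (γ : Γ) (hγ : (γ : Aff n).lin = 1) :
    ((φ γ : Γ) : Aff n).lin = 1 := by
  classical
  obtain ⟨hT, hFin, hInt⟩ := hΓ
  haveI : Finite (holonomy Γ) := hFin.to_subtype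
  haveI : Nonempty (holonomy Γ) := ⟨⟨1, one_mem_hol Γ⟩⟩
  set m := Nat.card (holonomy Γ) with hmdef
  have hm : 0 < m := Nat.card_pos
  -- `S z = φ(t_z)^m`, a translation in `Γ`.
  set S : (Fin n → ℤ) → Γ := fun z => (φ (tG Γ hT z)) ^ m with hS
  have slin : ∀ z, ((S z : Γ) : Aff n).lin = 1 := by
    intro z
    show (((φ (tG Γ hT z) : Γ) : Aff n) ^ m).lin = 1
    rw [lin_pow]
    exact pow_hol Γ hFin (memhol Γ _)
  have hSmul : ∀ z w, S (z + w) = S z * S w := by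
    intro z w
    have hc : Commute (φ (tG Γ hT z)) (φ (tG Γ hT w)) := by
      have : Commute (tG Γ hT z) (tG Γ hT w) := by
        apply Subtype.ext
        exact trans_comm rfl rfl
      exact this.map φ.toMonoidHom
    rw [hS]
    show (φ (tG Γ hT (z + w))) ^ m = _
    rw [tG_add, _root_.map_mul, hc.mul_pow]
  have hSadd : ∀ z w, ((S (z + w) : Γ) : Aff n).tr = ((S z : Γ) : Aff n).tr + ((S w : Γ) : Aff n).tr := by
    intro z w
    rw [hSmul z w]
    show (((S z : Γ) : Aff n) * ((S w : Γ) : Aff n)).tr = _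
    rw [tr_mul, slin z]
    simp
  have hSinj : ∀ z, ((S z : Γ) : Aff n).tr = 0 → z = 0 := by
    intro z hz
    have h1 : S z = 1 := by
      apply Subtype.ext
      show ((S z : Γ) : Aff n) = 1
      rw [Aff.one_def, ← hz, ← slin z, mk_eta]
    have h2 : (tG Γ hT z) ^ m = 1 := by
      apply φ.injective
      rw [_root_.map_pow, _root_.map_one]
      exact h1
    have h3 : (Aff.mk (fun i => (z i : ℝ)) 1 : Aff n) ^ m = 1 := congrArg Subtype.val h2
    rw [trans_pow, Aff.one_def] at h3
    have h4 : (m • fun i => ((z i : ℝ))) = (0 : Fin n → ℝ) := congrArg Aff.tr h3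
    funext i
    have h5 : (m : ℝ) * (z i : ℝ) = 0 := by
      have := congrFun h4 i
      simpa [nsmul_eq_mul] using this
    have h6 : (z i : ℝ) = 0 := by
      rcases mul_eq_zero.mp h5 with h | h
      · exact absurd h (by positivity)
      · exact h
    exact_mod_cast h6
  -- package the additive map
  set θ : (Fin n → ℤ) →+ (Fin n → ℝ) :=
    AddMonoidHom.mk' (fun z => ((S z : Γ) : Aff n).tr) hSadd with hθ
  set b : Fin n → (Fin n → ℝ) := fun j => θ (Pi.single j 1) with hb
  have hbint : ∀ j, ∃ w : Fin n → ℤ, b j = fun i => (w i : ℝ) := by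
    intro j
    apply (hT (b j)).mp
    have : ((S (Pi.single j 1) : Γ) : Aff n) = Aff.mk (b j) 1 := by
      rw [← slin (Pi.single j 1), hb]
      exact (mk_eta _).symm
    rw [← this]
    exact (S (Pi.single j 1)).2
  choose W hW using hbint
  set Bz : Matrix (Fin n) (Fin n) ℤ := Matrix.of (fun i j => W j i) with hBz
  have hθeq : ∀ z : Fin n → ℤ, θ z = fun i => ((Bz *ᵥ z) i : ℝ) := by
    intro z
    have h1 : z = ∑ j : Fin n, Pi.single j (z j) := by
      rw [Finset.univ_sum_single]
    have h2 : θ z = ∑ j : Fin n, (z j) • b j := by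
      conv_lhs => rw [h1]
      rw [_root_.map_sum]
      refine Finset.sum_congr rfl fun j _ => ?_
      have : Pi.single j (z j) = ((z j) • Pi.single j (1 : ℤ) : Fin n → ℤ) := by
        rw [← Pi.single_smul, smul_eq_mul, mul_one]
      rw [this, _root_.map_zsmul, hb]
    funext i
    rw [h2]
    rw [Finset.sum_apply]
    show ∑ j : Fin n, (z j) • (b j i) = (((Bz *ᵥ z) i : ℤ) : ℝ)
    rw [mulVec_apply', Int.cast_sum]
    refine Finset.sum_congr rfl fun j _ => ?_
    have hbw : b j i = (W j i : ℝ) := by rw [hW j]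
    rw [zsmul_eq_mul, hbw]
    have : Bz i j = W j i := rfl
    rw [this]
    push_cast
    ring
  have hdet : Bz.det ≠ 0 := by
    intro h
    obtain ⟨v, hv0, hv⟩ := Matrix.exists_mulVec_eq_zero_iff.mpr h
    apply hv0
    apply hSinj
    show θ v = 0
    rw [hθeq v, hv]
    funext i; simp
  -- D fixes all columns of B
  set D := ((φ γ : Γ) : Aff n).lin with hD
  have hfix : ∀ j, (D : Matrix (Fin n) (Fin n) ℝ) *ᵥ b j = b j := by
    intro j
    have hc : Commute (φ γ) (S (Pi.single j 1)) := by
      have h0 : Commute γ (tG Γ hT (Pi.single j 1)) := by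
        apply Subtype.ext
        exact trans_comm hγ rfl
      exact (h0.map φ.toMonoidHom).pow_right m
    have hc' : ((φ γ : Γ) : Aff n) * ((S (Pi.single j 1) : Γ) : Aff n)
        = ((S (Pi.single j 1) : Γ) : Aff n) * ((φ γ : Γ) : Aff n) := by
      exact congrArg Subtype.val hc
    have h1 := congrArg Aff.tr hc'
    rw [tr_mul, tr_mul, slin] at h1
    simp only [Units.val_one, Matrix.one_mulVec] at h1
    have h2 : ((S (Pi.single j 1) : Γ) : Aff n).tr = b j := rfl
    rw [h2] at h1
    have := h1
    rw [add_comm (b j) _] at this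
    exact (add_left_cancel this)
  set BR : Matrix (Fin n) (Fin n) ℝ := Bz.map (Int.cast : ℤ → ℝ) with hBR
  have hmat : (D : Matrix (Fin n) (Fin n) ℝ) * BR = BR := by
    ext i j
    rw [Matrix.mul_apply]
    have : ∀ k, BR k j = b j k := by
      intro k
      rw [hBR, Matrix.map_apply, hBz]
      show ((W j k : ℤ) : ℝ) = b j k
      rw [hW j]
    calc ∑ k, (D : Matrix (Fin n) (Fin n) ℝ) i k * BR k j
        = ((D : Matrix (Fin n) (Fin n) ℝ) *ᵥ b j) i := by
          rw [mulVec_apply']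
          exact Finset.sum_congr rfl fun k _ => by rw [this k]
      _ = b j i := by rw [hfix j]
      _ = BR i j := (this i).symm
  have hBdet : IsUnit BR.det := by
    have : BR.det = ((Bz.det : ℤ) : ℝ) := by
      rw [hBR]
      exact (RingHom.map_det (Int.castRingHom ℝ) Bz).symm
    rw [this]
    exact isUnit_iff_ne_zero.mpr (by exact_mod_cast hdet)
  have hD1 : (D : Matrix (Fin n) (Fin n) ℝ) = 1 := by
    have h2 := congrArg (· * BR⁻¹) hmat
    simpa [Matrix.mul_assoc, Matrix.mul_nonsing_inv _ hBdet] using h2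
  exact Units.ext (by rw [Units.val_one]; exact hD1)

end T

end CrystAux

end CrystAux

/-- There is a finite set `Δ ⊆ ℝⁿ` such that any two automorphisms of the crystallographic
group `Γ` agreeing on the translation subgroup `ℤⁿ` differ by an inner automorphism
composed with some `ξ_{(d,Iₙ)}`, `d ∈ Δ`. -/
theorem stmt9 {n : ℕ} (Γ : Subgroup (Aff n)) (hΓ : IsCrystallographic Γ) :
    ∃ Δ : Set (Fin n → ℝ), Δ.Finite ∧
      ∀ φ ψ : Γ ≃* Γ, (∀ γ : Γ, (γ : Aff n).lin = 1 → φ γ = ψ γ) →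
        ∃ d ∈ Δ, XiIsAut (Aff.mk d 1) Γ ∧
          ∃ c : Γ, ∀ γ : Γ,
            ((ψ γ : Γ) : Aff n) =
              (c : Aff n) *
                (Aff.mk d 1 * ((φ γ : Γ) : Aff n) * (Aff.mk d 1)⁻¹) *
                (c : Aff n)⁻¹ := by
  classical
  obtain ⟨hT, hFin, hInt⟩ := id hΓ
  haveI : Finite (holonomy Γ) := hFin.to_subtype
  haveI : Nonempty (holonomy Γ) := ⟨⟨1, CrystAux.one_mem_hol Γ⟩⟩
  set m := Nat.card (holonomy Γ) with hmdef
  have hm : 0 < m := Nat.card_pos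
  have hmR : ((m : ℝ)) ≠ 0 := by positivity
  refine ⟨Set.range (fun (j : Fin n → Fin m) (i : Fin n) => ((j i : ℕ) : ℝ) / (m : ℝ)),
    Set.finite_range _, ?_⟩
  intro φ ψ hagree
  set χ : Γ ≃* Γ := φ.symm.trans ψ with hχdef
  -- χ is the identity on translations
  have hχfix : ∀ x : Γ, (x : Aff n).lin = 1 → χ x = x := by
    intro x hx
    have h1 : ((φ.symm x : Γ) : Aff n).lin = 1 := CrystAux.aut_trans Γ hΓ φ.symm x hx
    have h2 : χ x = ψ (φ.symm x) := rfl
    rw [h2, ← hagree _ h1]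
    exact φ.apply_symm_apply x
  -- χ preserves linear parts
  have hχlin : ∀ x : Γ, ((χ x : Γ) : Aff n).lin = (x : Aff n).lin := by
    intro x
    have key : ∀ j : Fin n,
        (((χ x : Γ) : Aff n).lin : Matrix (Fin n) (Fin n) ℝ) *ᵥ
            (fun i => (((Pi.single j 1 : Fin n → ℤ)) i : ℝ)) =
          ((x : Aff n).lin : Matrix (Fin n) (Fin n) ℝ) *ᵥ
            (fun i => (((Pi.single j 1 : Fin n → ℤ)) i : ℝ)) := by
      intro j
      set v : Fin n → ℝ := fun i => (((Pi.single j 1 : Fin n → ℤ)) i : ℝ) with hvdef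
      set tj : Γ := CrystAux.tG Γ hT (Pi.single j 1) with htjdef
      have htjlin : ((tj : Γ) : Aff n).lin = 1 := rfl
      have hδ : ((x * tj * x⁻¹ : Γ) : Aff n) =
          Aff.mk (((x : Aff n).lin : Matrix (Fin n) (Fin n) ℝ) *ᵥ v) 1 := by
        show (x : Aff n) * Aff.mk v 1 * ((x : Aff n))⁻¹ = _
        exact CrystAux.conj_trans _ _
      have hδlin : ((x * tj * x⁻¹ : Γ) : Aff n).lin = 1 := by rw [hδ]
      have e1 : χ (x * tj * x⁻¹) = x * tj * x⁻¹ := hχfix _ hδlin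
      have e2 : χ (x * tj * x⁻¹) = χ x * tj * (χ x)⁻¹ := by
        rw [_root_.map_mul, _root_.map_mul, map_inv, hχfix tj htjlin]
      have e3 : ((χ x * tj * (χ x)⁻¹ : Γ) : Aff n) =
          Aff.mk ((((χ x : Γ) : Aff n).lin : Matrix (Fin n) (Fin n) ℝ) *ᵥ v) 1 := by
        show ((χ x : Γ) : Aff n) * Aff.mk v 1 * (((χ x : Γ) : Aff n))⁻¹ = _
        exact CrystAux.conj_trans _ _
      have e4 : Aff.mk ((((χ x : Γ) : Aff n).lin : Matrix (Fin n) (Fin n) ℝ) *ᵥ v) 1 =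
          Aff.mk (((x : Aff n).lin : Matrix (Fin n) (Fin n) ℝ) *ᵥ v) 1 := by
        rw [← e3, ← e2, e1, hδ]
      exact congrArg Aff.tr e4
    apply Units.ext
    ext i jj
    have h1 := congrFun (key jj) i
    rwa [CrystAux.mulVec_single_cast, CrystAux.mulVec_single_cast] at h1
  -- the cocycle k
  set k : Γ → (Fin n → ℝ) := fun x => ((χ x : Γ) : Aff n).tr - (x : Aff n).tr with hkdef
  have hkval : ∀ x : Γ, ((χ x : Γ) : Aff n) = Aff.mk ((x : Aff n).tr + k x) (x : Aff n).lin := by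
    intro x
    calc ((χ x : Γ) : Aff n) = Aff.mk ((χ x : Γ) : Aff n).tr ((χ x : Γ) : Aff n).lin :=
          (CrystAux.mk_eta _).symm
      _ = _ := by rw [hχlin x, hkdef]; congr 1; funext i; simp
  have hkint : ∀ x : Γ, ∃ z : Fin n → ℤ, k x = fun i => (z i : ℝ) := by
    intro x
    apply (hT (k x)).mp
    have hu : ((χ x : Γ) : Aff n) * ((x : Aff n))⁻¹ ∈ Γ := Γ.mul_mem (χ x).2 (Γ.inv_mem x.2)
    rwa [CrystAux.mul_inv_same_lin _ _ (hχlin x)] at hu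
  have hkD : ∀ x y : Γ, (x : Aff n).lin = (y : Aff n).lin → k x = k y := by
    intro x y hxy
    set δ : Γ := y * x⁻¹ with hδdef
    have hδval : ((δ : Γ) : Aff n) = Aff.mk ((y : Aff n).tr - (x : Aff n).tr) 1 := by
      show (y : Aff n) * ((x : Aff n))⁻¹ = _
      exact CrystAux.mul_inv_same_lin _ _ hxy.symm
    have hδlin : ((δ : Γ) : Aff n).lin = 1 := by rw [hδval]
    have hyx : y = δ * x := by rw [hδdef, inv_mul_cancel_right]
    have e1 : χ y = δ * χ x := by
      conv_lhs => rw [hyx]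
      rw [_root_.map_mul, hχfix δ hδlin]
    have e2 : ((χ y : Γ) : Aff n).tr =
        ((y : Aff n).tr - (x : Aff n).tr) + ((χ x : Γ) : Aff n).tr := by
      rw [e1]
      show (((δ : Γ) : Aff n) * ((χ x : Γ) : Aff n)).tr = _
      rw [CrystAux.tr_mul, hδval]
      simp
    have e3 : (y : Aff n).tr = ((y : Aff n).tr - (x : Aff n).tr) + (x : Aff n).tr := by
      funext i; simp
    rw [hkdef]
    funext i
    simp only [Pi.sub_apply]
    rw [e2, e3]
    simp only [Pi.add_apply, Pi.sub_apply]
    ring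
  have hkcoc : ∀ x y : Γ, k (x * y) =
      k x + ((x : Aff n).lin : Matrix (Fin n) (Fin n) ℝ) *ᵥ k y := by
    intro x y
    have e1 : ((χ (x * y) : Γ) : Aff n).tr = ((χ x : Γ) : Aff n).tr +
        ((x : Aff n).lin : Matrix (Fin n) (Fin n) ℝ) *ᵥ ((χ y : Γ) : Aff n).tr := by
      rw [_root_.map_mul]
      show (((χ x : Γ) : Aff n) * ((χ y : Γ) : Aff n)).tr = _
      rw [CrystAux.tr_mul, hχlin x]
    have e2 : ((x * y : Γ) : Aff n).tr = (x : Aff n).tr +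
        ((x : Aff n).lin : Matrix (Fin n) (Fin n) ℝ) *ᵥ (y : Aff n).tr := rfl
    rw [hkdef]
    funext i
    simp only [Pi.sub_apply, Pi.add_apply, e1, e2, Matrix.mulVec_sub]
    ring
  -- averaging over holonomy
  set Fs : Finset (GL (Fin n) ℝ) := hFin.toFinset with hFsdef
  have hFsmem : ∀ D : GL (Fin n) ℝ, D ∈ Fs ↔ D ∈ holonomy Γ := fun D => hFin.mem_toFinset
  set sec : GL (Fin n) ℝ → Γ := fun D =>
    if h : D ∈ holonomy Γ then ⟨Aff.mk h.choose D, h.choose_spec⟩ else 1 with hsecdef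
  have hsec_lin : ∀ (D : GL (Fin n) ℝ), D ∈ holonomy Γ → ((sec D : Γ) : Aff n).lin = D := by
    intro D h
    rw [hsecdef]
    simp only [dif_pos h]
  set K : GL (Fin n) ℝ → (Fin n → ℝ) := fun D => k (sec D) with hKdef
  set Sig : Fin n → ℝ := ∑ E ∈ Fs, K E with hSigdef
  set d : Fin n → ℝ := (m : ℝ)⁻¹ • Sig with hddef
  have hcard : Fs.card = m := by
    rw [hFsdef, ← Set.ncard_eq_toFinset_card _ hFin, ← Nat.card_coe_set_eq]
  have hKeq : ∀ D ∈ holonomy Γ, K D = d - (D : Matrix (Fin n) (Fin n) ℝ) *ᵥ d := by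
    intro D hD
    have hsum1 : ∑ E ∈ Fs, K (D * E) = ∑ E ∈ Fs, K E := by
      refine Finset.sum_equiv (Equiv.mulLeft D) ?_ ?_
      · intro E
        rw [hFsmem, hFsmem]
        constructor
        · exact fun h => CrystAux.mul_mem_hol Γ hD h
        · intro h
          have h2 := CrystAux.mul_mem_hol Γ (CrystAux.inv_mem_hol Γ hD) h
          rwa [show D⁻¹ * ((Equiv.mulLeft D) E) = E by simp] at h2
      · intro E _
        rfl
    have hKmul : ∀ E ∈ holonomy Γ, K (D * E) =
        K D + (D : Matrix (Fin n) (Fin n) ℝ) *ᵥ K E := by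
      intro E hE
      have h1 : ((sec D * sec E : Γ) : Aff n).lin = D * E := by
        show ((sec D : Γ) : Aff n).lin * ((sec E : Γ) : Aff n).lin = D * E
        rw [hsec_lin _ hD, hsec_lin _ hE]
      have h2 : K (D * E) = k (sec D * sec E) := by
        rw [hKdef]
        exact hkD _ _ (by rw [hsec_lin _ (CrystAux.mul_mem_hol Γ hD hE), h1])
      rw [h2, hkcoc, hsec_lin _ hD, hKdef]
    have hsum2 : Sig = m • K D + (D : Matrix (Fin n) (Fin n) ℝ) *ᵥ Sig := by
      rw [hSigdef]
      calc ∑ E ∈ Fs, K E = ∑ E ∈ Fs, K (D * E) := hsum1.symm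
        _ = ∑ E ∈ Fs, (K D + (D : Matrix (Fin n) (Fin n) ℝ) *ᵥ K E) :=
            Finset.sum_congr rfl fun E hE => hKmul E ((hFsmem E).mp hE)
        _ = Fs.card • K D + ∑ E ∈ Fs, (D : Matrix (Fin n) (Fin n) ℝ) *ᵥ K E := by
            rw [Finset.sum_add_distrib, Finset.sum_const]
        _ = m • K D + (D : Matrix (Fin n) (Fin n) ℝ) *ᵥ ∑ E ∈ Fs, K E := by
            rw [hcard]
            congr 1
            exact (map_sum ((D : Matrix (Fin n) (Fin n) ℝ).mulVecLin) K Fs).symm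
    have hsub : m • K D = Sig - (D : Matrix (Fin n) (Fin n) ℝ) *ᵥ Sig :=
      eq_sub_of_add_eq hsum2.symm
    have hfinal : d - (D : Matrix (Fin n) (Fin n) ℝ) *ᵥ d = K D := by
      rw [hddef, Matrix.mulVec_smul, ← smul_sub, ← hsub, ← Nat.cast_smul_eq_nsmul ℝ,
        smul_smul, inv_mul_cancel₀ hmR, one_smul]
    exact hfinal.symm
  -- conjugation formula for χ
  have hχconj : ∀ x : Γ, ((χ x : Γ) : Aff n) = Aff.mk d 1 * (x : Aff n) * (Aff.mk d 1)⁻¹ := by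
    intro x
    have hmem : (x : Aff n).lin ∈ holonomy Γ := CrystAux.memhol Γ x
    have h1 : k x = K ((x : Aff n).lin) := by
      rw [hKdef]
      exact hkD x (sec ((x : Aff n).lin)) (by rw [hsec_lin _ hmem])
    rw [hkval x, h1, hKeq _ hmem]
    rw [show (x : Aff n) = Aff.mk (x : Aff n).tr (x : Aff n).lin from (CrystAux.mk_eta _).symm]
    rw [CrystAux.conj_by_trans]
    congr 1
    funext i
    simp [add_sub_assoc]
  -- integrality of d
  have hdint : ∀ i, ∃ p : ℤ, d i = (p : ℝ) / (m : ℝ) := by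
    have hZK := fun E : GL (Fin n) ℝ => hkint (sec E)
    choose ZK hZKeq using hZK
    intro i
    refine ⟨(∑ E ∈ Fs, ZK E) i, ?_⟩
    have hS : Sig i = (((∑ E ∈ Fs, ZK E) i : ℤ) : ℝ) := by
      calc Sig i = ∑ E ∈ Fs, K E i := by rw [hSigdef]; exact Finset.sum_apply i Fs K
        _ = ∑ E ∈ Fs, ((ZK E i : ℤ) : ℝ) := Finset.sum_congr rfl fun E _ => by
              rw [show K E = k (sec E) from rfl, hZKeq E]
        _ = (((∑ E ∈ Fs, ZK E) i : ℤ) : ℝ) := by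
              rw [Finset.sum_apply]
              push_cast
              rfl
    show d i = _
    rw [hddef, Pi.smul_apply, smul_eq_mul, hS, inv_mul_eq_div]
  choose P hP using hdint
  set z₀ : Fin n → ℤ := fun i => P i / (m : ℤ) with hz₀def
  have hmod : ∀ i, 0 ≤ P i % (m : ℤ) ∧ P i % (m : ℤ) < (m : ℤ) := by
    intro i
    constructor
    · exact Int.emod_nonneg _ (by exact_mod_cast hm.ne')
    · exact Int.emod_lt_of_pos _ (by exact_mod_cast hm)
  set j0 : Fin n → Fin m := fun i => ⟨(P i % (m : ℤ)).toNat, by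
    have := hmod i; omega⟩ with hj0def
  set d0 : Fin n → ℝ := fun i => ((j0 i : ℕ) : ℝ) / (m : ℝ) with hd0def
  have hd0 : ∀ i, d i = d0 i + ((z₀ i : ℤ) : ℝ) := by
    intro i
    have h1 : (P i % (m : ℤ)).toNat = P i % (m : ℤ) := Int.toNat_of_nonneg (hmod i).1
    have h2 : d0 i = ((P i % (m : ℤ) : ℤ) : ℝ) / (m : ℝ) := by
      show ((j0 i : ℕ) : ℝ) / (m : ℝ) = _
      congr 1
      show (((P i % (m : ℤ)).toNat : ℕ) : ℝ) = _
      exact_mod_cast congrArg (fun t : ℤ => (t : ℝ)) h1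
    have h4 : ((z₀ i : ℤ) : ℝ) = ((P i / (m : ℤ) : ℤ) : ℝ) := rfl
    have h3 : ((P i : ℤ) : ℝ) =
        (m : ℝ) * ((P i / (m : ℤ) : ℤ) : ℝ) + ((P i % (m : ℤ) : ℤ) : ℝ) := by
      exact_mod_cast congrArg (fun t : ℤ => (t : ℝ)) (Int.mul_ediv_add_emod (P i) (m : ℤ)).symm
    rw [hP i, h2, h4, h3]
    field_simp
    ring
  set c : Γ := ⟨Aff.mk (fun i => ((z₀ i : ℤ) : ℝ)) 1, (hT _).mpr ⟨z₀, rfl⟩⟩ with hcdef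
  have hsplit : (c : Aff n) * Aff.mk d0 1 = Aff.mk d 1 := by
    rw [hcdef]
    show Aff.mk _ 1 * Aff.mk d0 1 = Aff.mk d 1
    rw [CrystAux.trans_mul]
    congr 1
    funext i
    rw [Pi.add_apply]
    rw [hd0 i]
    ring
  have hconj_eq : ∀ g : Aff n,
      Aff.mk d 1 * g * (Aff.mk d 1)⁻¹ =
        (c : Aff n) * (Aff.mk d0 1 * g * (Aff.mk d0 1)⁻¹) * (c : Aff n)⁻¹ := by
    intro g
    rw [← hsplit]
    group
  refine ⟨d0, ⟨j0, rfl⟩, ?_, c, ?_⟩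
  · -- XiIsAut
    intro g
    constructor
    · intro hg
      have h1 : Aff.mk d 1 * g * (Aff.mk d 1)⁻¹ ∈ Γ := by
        rw [← hχconj ⟨g, hg⟩]
        exact (χ ⟨g, hg⟩).2
      have h2 : Aff.mk d0 1 * g * (Aff.mk d0 1)⁻¹ =
          (c : Aff n)⁻¹ * (Aff.mk d 1 * g * (Aff.mk d 1)⁻¹) * (c : Aff n) := by
        rw [hconj_eq g]
        group
      rw [h2]
      exact Γ.mul_mem (Γ.mul_mem (Γ.inv_mem c.2) h1) c.2
    · intro hg
      have h1 : Aff.mk d 1 * g * (Aff.mk d 1)⁻¹ ∈ Γ := by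
        rw [hconj_eq g]
        exact Γ.mul_mem (Γ.mul_mem c.2 hg) (Γ.inv_mem c.2)
      obtain ⟨y, hy⟩ := χ.surjective ⟨_, h1⟩
      have h2 : ((χ y : Γ) : Aff n) = Aff.mk d 1 * g * (Aff.mk d 1)⁻¹ := by
        rw [hy]
      have h3 : Aff.mk d 1 * (y : Aff n) * (Aff.mk d 1)⁻¹ =
          Aff.mk d 1 * g * (Aff.mk d 1)⁻¹ := by rw [← hχconj y, h2]
      have h4 : (y : Aff n) = g := by
        have := mul_right_cancel h3
        exact mul_left_cancel this
      rw [← h4]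
      exact y.2
  · -- the conjugation identity
    intro γ
    have h1 : ψ γ = χ (φ γ) := by
      rw [hχdef]
      show ψ γ = ψ (φ.symm (φ γ))
      rw [φ.symm_apply_apply]
    rw [h1, hχconj (φ γ), hconj_eq]
end
end

section
/- Let Γ ≤ Aff(ℝⁿ) be an n-dimensional crystallographic group and let D ∈ GLₙ(ℤ). Then the set {R(φ) : φ ∈ Aut(Γ) with φ|_{ℤⁿ} = D}, where φ|_{ℤⁿ} = D means φ(z,Iₙ) = (Dz,Iₙ) for all z ∈ ℤⁿ, is a finite subset of ℕ ∪ {∞}. -/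
open Matrix

noncomputable section

section Helpers

variable {n : ℕ}

theorem Aff.mk_eta (a : Aff n) : Aff.mk a.tr a.lin = a := rfl

theorem Aff.mul_tr (a b : Aff n) :
    (a * b).tr = a.tr + (a.lin : Matrix (Fin n) (Fin n) ℝ) *ᵥ b.tr := rfl

theorem Aff.mul_lin (a b : Aff n) : (a * b).lin = a.lin * b.lin := rfl

theorem Aff.inv_lin (a : Aff n) : (a⁻¹).lin = a.lin⁻¹ := rfl

theorem Aff.one_lin : (1 : Aff n).lin = 1 := rfl

theorem Aff.mul_inv_lin (a b : Aff n) (h : a.lin = b.lin) : (a * b⁻¹).lin = 1 := by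
  rw [Aff.mul_lin, Aff.inv_lin, h, mul_inv_cancel]

theorem Aff.mul_inv_tr (a b : Aff n) (h : a.lin = b.lin) : (a * b⁻¹).tr = a.tr - b.tr := by
  rw [Aff.mul_tr, Aff.inv_def]
  show a.tr + (a.lin : Matrix (Fin n) (Fin n) ℝ) *ᵥ
      (((b.lin⁻¹ : GL (Fin n) ℝ) : Matrix (Fin n) (Fin n) ℝ) *ᵥ (-b.tr)) = a.tr - b.tr
  rw [Matrix.mulVec_mulVec, h, ← Units.val_mul, mul_inv_cancel, Units.val_one,
    Matrix.one_mulVec]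
  exact (sub_eq_add_neg _ _).symm

theorem Aff.conj_tau (v : Fin n → ℝ) (x : Aff n) :
    Aff.mk v 1 * x * (Aff.mk v 1)⁻¹ =
      Aff.mk (x.tr + (v - (x.lin : Matrix (Fin n) (Fin n) ℝ) *ᵥ v)) x.lin := by
  ext i
  · simp [Aff.mul_def, Aff.inv_def, Matrix.mulVec_neg, sub_eq_add_neg]
    ring
  · simp [Aff.mul_def, Aff.inv_def]

theorem reidemeisterNumber_conj_eq {G : Type*} [Group G] (φ ψ : G →* G) (g : G)
    (h : ∀ x, ψ x = g * φ x * g⁻¹) : reidemeisterNumber ψ = reidemeisterNumber φ := by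
  have h1 : ∀ a b, twistedConj ψ a b → twistedConj φ (a * g) (b * g) := by
    rintro a b ⟨k, rfl⟩
    exact ⟨k, by rw [h k]; group⟩
  have h2 : ∀ a b, twistedConj φ a b → twistedConj ψ (a * g⁻¹) (b * g⁻¹) := by
    rintro a b ⟨k, rfl⟩
    exact ⟨k, by rw [h k]; group⟩
  apply ENat.card_congr
  refine ⟨Quot.map (· * g) h1, Quot.map (· * g⁻¹) h2, ?_, ?_⟩
  · intro q
    induction q using Quot.ind with
    | _ x =>
      show Quot.mk (twistedConj ψ) (x * g * g⁻¹) = Quot.mk (twistedConj ψ) x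
      rw [mul_inv_cancel_right]
  · intro q
    induction q using Quot.ind with
    | _ x =>
      show Quot.mk (twistedConj φ) (x * g⁻¹ * g) = Quot.mk (twistedConj φ) x
      rw [inv_mul_cancel_right]

end Helpers

/-- For a crystallographic group `Γ` and `D ∈ GLₙ(ℤ)`, the set of Reidemeister numbers of
automorphisms of `Γ` restricting to `D` on the translation subgroup `ℤⁿ` is finite. -/
theorem stmt10 {n : ℕ} (Γ : Subgroup (Aff n)) (hΓ : IsCrystallographic Γ)
    (D : GL (Fin n) ℤ) :
    {r : ℕ∞ | ∃ φ : Γ ≃* Γ,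
      (∀ (z : Fin n → ℤ) (hz : Aff.mk (fun i => (z i : ℝ)) 1 ∈ Γ),
        ((φ ⟨Aff.mk (fun i => (z i : ℝ)) 1, hz⟩ : Γ) : Aff n) =
          Aff.mk (fun i => ((((D : Matrix (Fin n) (Fin n) ℤ) *ᵥ z) i : ℤ) : ℝ)) 1) ∧
      reidemeisterNumber φ.toMonoidHom = r}.Finite := by
  classical
  obtain ⟨hTrans, hFin, -⟩ := hΓ
  set P : (Γ ≃* Γ) → Prop := fun φ =>
    (∀ (z : Fin n → ℤ) (hz : Aff.mk (fun i => (z i : ℝ)) 1 ∈ Γ),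
      ((φ ⟨Aff.mk (fun i => (z i : ℝ)) 1, hz⟩ : Γ) : Aff n) =
        Aff.mk (fun i => ((((D : Matrix (Fin n) (Fin n) ℤ) *ᵥ z) i : ℤ) : ℝ)) 1) with hPdef
  by_cases hex : ∃ φ : Γ ≃* Γ, P φ
  swap
  · refine Set.Finite.subset Set.finite_empty ?_
    rintro r ⟨φ, h1, -⟩
    exact absurd ⟨φ, h1⟩ hex
  obtain ⟨φ₀, hφ₀⟩ := hex
  haveI fin1 : Fintype ↥(holonomy Γ) := hFin.fintype
  have hone : (1 : GL (Fin n) ℝ) ∈ holonomy Γ := ⟨0, Γ.one_mem⟩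
  haveI : Nonempty ↥(holonomy Γ) := ⟨⟨1, hone⟩⟩
  set m := Fintype.card ↥(holonomy Γ) with hmdef
  have hm0 : m ≠ 0 := Fintype.card_ne_zero
  haveI : NeZero m := ⟨hm0⟩
  have memhol : ∀ γ : Γ, ((γ : Aff n)).lin ∈ holonomy Γ :=
    fun γ => ⟨(γ : Aff n).tr, by rw [Aff.mk_eta]; exact γ.2⟩
  have hsecex : ∀ A : ↥(holonomy Γ), ∃ γ : Γ, ((γ : Aff n)).lin = (A : GL (Fin n) ℝ) := by
    rintro ⟨A, a, ha⟩
    exact ⟨⟨Aff.mk a A, ha⟩, rfl⟩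
  choose sec hsec using hsecex
  -- images of pure translations are determined
  have htrans : ∀ t : Γ, ((t : Aff n)).lin = 1 → ∃ w : Fin n → ℤ,
      ∀ φ : Γ ≃* Γ, P φ → ((φ t : Γ) : Aff n) = Aff.mk (fun i => (w i : ℝ)) 1 := by
    intro t ht
    have h1 : ((t : Aff n)) = Aff.mk (t : Aff n).tr 1 := by
      rw [← ht, Aff.mk_eta]
    obtain ⟨z, hz⟩ := (hTrans (t : Aff n).tr).mp (by rw [← h1]; exact t.2)
    have hz' : Aff.mk (fun i => ((z i : ℝ))) 1 ∈ Γ := by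
      rw [← hz, ← h1]; exact t.2
    refine ⟨(D : Matrix (Fin n) (Fin n) ℤ) *ᵥ z, fun φ hφ => ?_⟩
    have ht2 : t = ⟨Aff.mk (fun i => (z i : ℝ)) 1, hz'⟩ := by
      apply Subtype.ext
      rw [h1, hz]
    rw [ht2]
    exact hφ z hz'
  -- linear parts of images only depend on linear parts
  have hlinfac : ∀ φ : Γ ≃* Γ, P φ → ∀ γ δ : Γ, ((γ : Aff n)).lin = ((δ : Aff n)).lin →
      ((φ γ : Aff n)).lin = ((φ δ : Aff n)).lin := by
    intro φ hφ γ δ h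
    have ht : ((↑(γ * δ⁻¹) : Aff n)).lin = 1 := by
      rw [Subgroup.coe_mul, Subgroup.coe_inv]
      exact Aff.mul_inv_lin _ _ h
    obtain ⟨w, hw⟩ := htrans _ ht
    have hγ : γ = (γ * δ⁻¹) * δ := by group
    rw [hγ, _root_.map_mul, Subgroup.coe_mul, Aff.mul_lin, hw φ hφ]
    show 1 * _ = _
    rw [one_mul]
  -- the difference vector of two automorphisms
  set dv : (Γ ≃* Γ) → (Γ ≃* Γ) → Γ → (Fin n → ℝ) :=
    fun φ ψ γ => ((φ γ : Aff n)).tr - ((ψ γ : Aff n)).tr with hdv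
  -- cocycle identity
  have hcoc : ∀ φ ψ : Γ ≃* Γ, (∀ γ : Γ, ((φ γ : Aff n)).lin = ((ψ γ : Aff n)).lin) →
      ∀ γ δ : Γ, dv φ ψ (γ * δ) = dv φ ψ γ +
        (((φ γ : Aff n)).lin : Matrix (Fin n) (Fin n) ℝ) *ᵥ dv φ ψ δ := by
    intro φ ψ hl γ δ
    simp only [hdv]
    rw [_root_.map_mul, _root_.map_mul, Subgroup.coe_mul, Subgroup.coe_mul,
      Aff.mul_tr, Aff.mul_tr, ← hl γ, Matrix.mulVec_sub]
    abel
  -- the difference vector only depends on the linear part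
  have hfac : ∀ φ ψ : Γ ≃* Γ, P φ → P ψ →
      (∀ γ : Γ, ((φ γ : Aff n)).lin = ((ψ γ : Aff n)).lin) →
      ∀ γ δ : Γ, ((γ : Aff n)).lin = ((δ : Aff n)).lin → dv φ ψ γ = dv φ ψ δ := by
    intro φ ψ hφ hψ hl γ δ h
    obtain ⟨w, hw⟩ := htrans (γ * δ⁻¹)
      (by rw [Subgroup.coe_mul, Subgroup.coe_inv]; exact Aff.mul_inv_lin _ _ h)
    have h1 : dv φ ψ (γ * δ⁻¹) = 0 := by
      simp only [hdv]
      rw [hw φ hφ, hw ψ hψ, sub_self]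
    have h2 : ((φ (γ * δ⁻¹) : Aff n)).lin = 1 := by rw [hw φ hφ]
    have h3 := hcoc φ ψ hl (γ * δ⁻¹) δ
    rw [inv_mul_cancel_right] at h3
    rw [h3, h1, h2]
    show (0 : Fin n → ℝ) + ((1 : GL (Fin n) ℝ) : Matrix (Fin n) (Fin n) ℝ) *ᵥ _ = _
    rw [Units.val_one, Matrix.one_mulVec, zero_add]
  -- the difference vector is integral
  have hdint : ∀ φ ψ : Γ ≃* Γ, (∀ γ : Γ, ((φ γ : Aff n)).lin = ((ψ γ : Aff n)).lin) →
      ∀ γ : Γ, ∃ z : Fin n → ℤ, dv φ ψ γ = fun i => (z i : ℝ) := by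
    intro φ ψ hl γ
    have hmem : ((φ γ * (ψ γ)⁻¹ : Γ) : Aff n) ∈ Γ := (φ γ * (ψ γ)⁻¹ : Γ).2
    have hlin1 : ((φ γ * (ψ γ)⁻¹ : Γ) : Aff n).lin = 1 := by
      rw [Subgroup.coe_mul, Subgroup.coe_inv]
      exact Aff.mul_inv_lin _ _ (hl γ)
    have htr : ((φ γ * (ψ γ)⁻¹ : Γ) : Aff n).tr = dv φ ψ γ := by
      rw [Subgroup.coe_mul, Subgroup.coe_inv, Aff.mul_inv_tr _ _ (hl γ)]
    apply (hTrans (dv φ ψ γ)).mp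
    rw [← htr, ← hlin1, Aff.mk_eta]
    exact hmem
  -- holonomy is multiplicatively closed
  have hmul : ∀ A B : GL (Fin n) ℝ, A ∈ holonomy Γ → B ∈ holonomy Γ →
      A * B ∈ holonomy Γ := by
    rintro A B ⟨a, ha⟩ ⟨b, hb⟩
    exact ⟨(Aff.mk a A * Aff.mk b B).tr, by exact mul_mem ha hb⟩
  have hinv : ∀ A : GL (Fin n) ℝ, A ∈ holonomy Γ → A⁻¹ ∈ holonomy Γ := by
    rintro A ⟨a, ha⟩
    exact ⟨((Aff.mk a A)⁻¹).tr, by exact inv_mem ha⟩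
  -- averaging: congruent mod m implies difference is a coboundary
  have hkey : ∀ φ ψ : Γ ≃* Γ, P φ → P ψ →
      (∀ γ : Γ, ((φ γ : Aff n)).lin = ((ψ γ : Aff n)).lin) →
      ∀ e : ↥(holonomy Γ) → Fin n → ℤ,
        (∀ A i, dv φ ψ (sec A) i = (m : ℝ) * (e A i)) →
      ∃ σ : Fin n → ℤ, ∀ γ : Γ, dv φ ψ γ =
        (fun i => (σ i : ℝ)) -
          (((φ γ : Aff n)).lin : Matrix (Fin n) (Fin n) ℝ) *ᵥ (fun i => (σ i : ℝ)) := by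
    intro φ ψ hφ hψ hl e he
    refine ⟨fun i => ∑ A : ↥(holonomy Γ), e A i, fun γ => ?_⟩
    set σr : Fin n → ℝ := fun i => ((∑ A : ↥(holonomy Γ), e A i : ℤ) : ℝ) with hσr
    have hsum0 : ∑ A : ↥(holonomy Γ), dv φ ψ (sec A) = (m : ℝ) • σr := by
      funext i
      rw [Finset.sum_apply]
      simp only [he]
      rw [← Finset.mul_sum]
      simp only [hσr, Pi.smul_apply, smul_eq_mul]
      push_cast
      ring
    have hbij : ∑ A : ↥(holonomy Γ), dv φ ψ (γ * sec A) =
        ∑ A : ↥(holonomy Γ), dv φ ψ (sec A) := by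
      refine Fintype.sum_equiv
        ⟨fun A => ⟨((γ : Aff n)).lin * A.1, hmul _ _ (memhol γ) A.2⟩,
         fun B => ⟨((γ : Aff n)).lin⁻¹ * B.1, hmul _ _ (hinv _ (memhol γ)) B.2⟩,
         fun A => Subtype.ext (inv_mul_cancel_left _ _),
         fun B => Subtype.ext (mul_inv_cancel_left _ _)⟩ _ _ ?_
      intro A
      apply hfac φ ψ hφ hψ hl
      rw [Subgroup.coe_mul, Aff.mul_lin, hsec, hsec]
      rfl
    have h3 : ∑ A : ↥(holonomy Γ), dv φ ψ (γ * sec A) =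
        m • dv φ ψ γ +
          (((φ γ : Aff n)).lin : Matrix (Fin n) (Fin n) ℝ) *ᵥ
            (∑ A : ↥(holonomy Γ), dv φ ψ (sec A)) := by
      rw [Finset.sum_congr rfl (fun A _ => hcoc φ ψ hl γ (sec A))]
      rw [Finset.sum_add_distrib, Finset.sum_const, Finset.card_univ]
      congr 1
      simp only [← Matrix.mulVecLin_apply]
      exact (map_sum (Matrix.mulVecLin _) _ _).symm
    rw [hbij, hsum0, Matrix.mulVec_smul, ← Nat.cast_smul_eq_nsmul ℝ m (dv φ ψ γ)] at h3
    have h4 : (m : ℝ) • σr = (m : ℝ) • (dv φ ψ γ +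
        (((φ γ : Aff n)).lin : Matrix (Fin n) (Fin n) ℝ) *ᵥ σr) := by
      rw [smul_add]
      exact h3
    have h5 := smul_right_injective (Fin n → ℝ)
      (by exact_mod_cast hm0 : (m : ℝ) ≠ 0) h4
    have h6 : dv φ ψ γ = σr - (((φ γ : Aff n)).lin : Matrix (Fin n) (Fin n) ℝ) *ᵥ σr :=
      eq_sub_of_add_eq h5.symm
    exact h6
  -- extraction of the integer value of an integral real
  have hintOfex : ∃ f : ℝ → ℤ, ∀ (x : ℝ) (z : ℤ), x = (z : ℝ) → f x = z := by
    refine ⟨fun x => if h : ∃ z : ℤ, x = (z : ℝ) then h.choose else 0, fun x z hx => ?_⟩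
    beta_reduce
    rw [dif_pos ⟨z, hx⟩]
    have h2 := (⟨z, hx⟩ : ∃ z' : ℤ, x = (z' : ℝ)).choose_spec
    exact_mod_cast (h2.symm.trans hx)
  obtain ⟨intOf, hintOf⟩ := hintOfex
  -- first invariant: the induced map on the holonomy group
  obtain ⟨inv1, hinv1⟩ : ∃ I : (Γ ≃* Γ) → (↥(holonomy Γ) → ↥(holonomy Γ)),
      ∀ φ A, ((I φ A : GL (Fin n) ℝ)) = ((φ (sec A) : Aff n)).lin :=
    ⟨fun φ A => ⟨((φ (sec A) : Aff n)).lin, memhol _⟩, fun _ _ => rfl⟩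
  have hlin2 : ∀ φ φ' : Γ ≃* Γ, P φ → P φ' → inv1 φ = inv1 φ' →
      ∀ γ : Γ, ((φ γ : Aff n)).lin = ((φ' γ : Aff n)).lin := by
    intro φ φ' hφ hφ' h γ
    have e1 : ((φ γ : Aff n)).lin = ((φ (sec ⟨((γ : Aff n)).lin, memhol γ⟩) : Aff n)).lin :=
      hlinfac φ hφ γ _ (by rw [hsec])
    have e2 : ((φ' γ : Aff n)).lin = ((φ' (sec ⟨((γ : Aff n)).lin, memhol γ⟩) : Aff n)).lin :=
      hlinfac φ' hφ' γ _ (by rw [hsec])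
    rw [e1, e2, ← hinv1, ← hinv1, h]
  -- choice of representatives
  obtain ⟨rep, hrep⟩ : ∃ rep : (↥(holonomy Γ) → ↥(holonomy Γ)) → (Γ ≃* Γ),
      ∀ v, (P (rep v)) ∧ ((∃ φ, P φ ∧ inv1 φ = v) → inv1 (rep v) = v) := by
    refine ⟨fun v => if h : ∃ φ, P φ ∧ inv1 φ = v then h.choose else φ₀, fun v => ?_⟩
    beta_reduce
    by_cases h : ∃ φ, P φ ∧ inv1 φ = v
    · rw [dif_pos h]
      exact ⟨h.choose_spec.1, fun _ => h.choose_spec.2⟩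
    · rw [dif_neg h]
      exact ⟨hφ₀, fun hh => absurd hh h⟩
  -- the full invariant
  set Jm : (Γ ≃* Γ) →
      ((↥(holonomy Γ) → ↥(holonomy Γ)) × (↥(holonomy Γ) → Fin n → ZMod m)) :=
    fun φ => (inv1 φ, fun A i =>
      ((intOf (dv φ (rep (inv1 φ)) (sec A) i) : ℤ) : ZMod m)) with hJm
  -- main step: equal invariants imply equal Reidemeister numbers
  have hmain : ∀ φ φ' : Γ ≃* Γ, P φ → P φ' → Jm φ = Jm φ' →
      reidemeisterNumber φ'.toMonoidHom = reidemeisterNumber φ.toMonoidHom := by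
    intro φ φ' hφ hφ' hJ
    have hI : inv1 φ = inv1 φ' := congrArg Prod.fst hJ
    set ψ := rep (inv1 φ) with hψdef
    have hPψ : P ψ := (hrep _).1
    have hIψ : inv1 ψ = inv1 φ := (hrep _).2 ⟨φ, hφ, rfl⟩
    have hl1 : ∀ γ : Γ, ((φ γ : Aff n)).lin = ((ψ γ : Aff n)).lin :=
      hlin2 φ ψ hφ hPψ hIψ.symm
    have hl2 : ∀ γ : Γ, ((φ' γ : Aff n)).lin = ((ψ γ : Aff n)).lin :=
      hlin2 φ' ψ hφ' hPψ (hIψ.trans hI).symm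
    have hl3 : ∀ γ : Γ, ((φ' γ : Aff n)).lin = ((φ γ : Aff n)).lin :=
      fun γ => (hl2 γ).trans (hl1 γ).symm
    have hsnd : (Jm φ).2 = (Jm φ').2 := congrArg Prod.snd hJ
    simp only [hJm] at hsnd
    rw [← hI] at hsnd
    have he : ∀ (A : ↥(holonomy Γ)) (i : Fin n), ∃ c : ℤ,
        dv φ' φ (sec A) i = (m : ℝ) * c := by
      intro A i
      obtain ⟨z1, hz1⟩ := hdint φ ψ hl1 (sec A)
      obtain ⟨z2, hz2⟩ := hdint φ' ψ hl2 (sec A)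
      have e1 : intOf (dv φ ψ (sec A) i) = z1 i := hintOf _ _ (by rw [hz1])
      have e2 : intOf (dv φ' ψ (sec A) i) = z2 i := hintOf _ _ (by rw [hz2])
      have hc := congrFun (congrFun hsnd A) i
      rw [e1, e2] at hc
      obtain ⟨c, hcc⟩ := (ZMod.intCast_eq_intCast_iff_dvd_sub _ _ _).mp hc
      refine ⟨c, ?_⟩
      have hsplit : dv φ' φ (sec A) i = dv φ' ψ (sec A) i - dv φ ψ (sec A) i := by
        simp only [hdv, Pi.sub_apply]
        ring
      rw [hsplit, hz1, hz2]
      show ((z2 i : ℝ)) - ((z1 i : ℝ)) = (m : ℝ) * c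
      rw [← Int.cast_sub, hcc]
      push_cast
      ring
    choose e hme using he
    obtain ⟨σ, hσ⟩ := hkey φ' φ hφ' hφ hl3 e hme
    have hσmem : Aff.mk (fun i => (σ i : ℝ)) 1 ∈ Γ := (hTrans _).mpr ⟨σ, rfl⟩
    have hconj : ∀ x : Γ, φ'.toMonoidHom x =
        (⟨Aff.mk (fun i => (σ i : ℝ)) 1, hσmem⟩ : Γ) * φ.toMonoidHom x *
          (⟨Aff.mk (fun i => (σ i : ℝ)) 1, hσmem⟩ : Γ)⁻¹ := by
      intro x
      apply Subtype.ext
      rw [Subgroup.coe_mul, Subgroup.coe_mul, Subgroup.coe_inv]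
      show ((φ' x : Aff n)) = Aff.mk (fun i => (σ i : ℝ)) 1 * ((φ x : Aff n)) *
        (Aff.mk (fun i => (σ i : ℝ)) 1)⁻¹
      rw [Aff.conj_tau]
      have hd := hσ x
      refine (Aff.ext ?_ ?_).symm
      · have hd' : ((φ' x : Aff n)).tr - ((φ x : Aff n)).tr =
            (fun i => ((σ i : ℝ))) -
              (((φ x : Aff n)).lin : Matrix (Fin n) (Fin n) ℝ) *ᵥ (fun i => ((σ i : ℝ))) := by
          rw [← hl3 x]
          exact hd
        show ((φ x : Aff n)).tr + ((fun i => ((σ i : ℝ))) -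
            (((φ x : Aff n)).lin : Matrix (Fin n) (Fin n) ℝ) *ᵥ (fun i => ((σ i : ℝ)))) =
          ((φ' x : Aff n)).tr
        rw [← hd']
        abel
      · exact (hl3 x).symm
    exact reidemeisterNumber_conj_eq φ.toMonoidHom φ'.toMonoidHom _ hconj
  -- conclusion
  set K : ((↥(holonomy Γ) → ↥(holonomy Γ)) × (↥(holonomy Γ) → Fin n → ZMod m)) → ℕ∞ :=
    fun v => if h : ∃ φ, P φ ∧ Jm φ = v
      then reidemeisterNumber h.choose.toMonoidHom else ⊤ with hK
  refine Set.Finite.subset ((Set.finite_univ).image K) ?_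
  rintro r ⟨φ, hPφ, hR⟩
  refine ⟨Jm φ, Set.mem_univ _, ?_⟩
  have hhh : ∃ φ'', P φ'' ∧ Jm φ'' = Jm φ := ⟨φ, hPφ, rfl⟩
  calc K (Jm φ) = reidemeisterNumber hhh.choose.toMonoidHom := by
        simp only [hK]
        rw [dif_pos hhh]
    _ = reidemeisterNumber φ.toMonoidHom :=
        hmain φ hhh.choose hPφ hhh.choose_spec.1 hhh.choose_spec.2.symm
    _ = r := hR

end
end

section
/- Let B ∈ ℤ^{n×n} and b ∈ ℤⁿ, and define the equivalence relation on ℤⁿ by x ~ y if and only if there exists z ∈ ℤⁿ with x − y = Bz or x + y + b = Bz. Then the number E(B,b) of equivalence classes satisfies E(B,b) = (|det(B)|_∞ + O(B,b))/2; in particular, if det(B) ≠ 0 there are exactly (|det(B)| + O(B,b))/2 classes, and if det(B) = 0 there are infinitely many classes. -/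
open Matrix

noncomputable section

/-!
Write `G = ℤⁿ ⧸ Bℤⁿ` and `σ g = -g - b̄`, an involution of `G`. Two vectors are related exactly
when their images `g, h` satisfy `h = g` or `h = σ g`, so `E(B,b)` counts the `σ`-orbits of `G`.
A set of orbit representatives and its image under `σ` cover `G` and meet in the fixed points,
whence `2 E(B,b) = #G + #Fix σ`. By the Smith normal form `#G = |det B|`, and when `det B = 0` a
nonzero left kernel vector `v` of `B` gives the functional `v ⬝ᵥ ·` on `G`, unbounded on `ℤv`.
Finally `[x]` is fixed by `σ` iff `2x + b = Bw` for some `w`, and for injective `B` the class `[x]`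
and the residue `w mod 2` determine each other, which matches `Fix σ` with the solutions of
`B̄ z = b̄` over `ZMod 2`.
-/

open Function Set

theorem ENat.card_eq_of_surjective_of_eq_iff {W X Y : Type*} (f : W → X) (g : W → Y)
    (hf : Surjective f) (hg : Surjective g) (hfg : ∀ p q, f p = f q ↔ g p = g q) :
    ENat.card X = ENat.card Y :=
  ENat.card_congr <| (Setoid.quotientKerEquivOfSurjective f hf).symm.trans <|
    (Quotient.congrRight hfg).trans (Setoid.quotientKerEquivOfSurjective g hg)

theorem ENat.card_quot_eq_of_surjective {α β : Type*} {r : α → α → Prop} {s : β → β → Prop}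
    (hs : Equivalence s) (f : α → β) (hf : Surjective f) (h : ∀ x y, r x y ↔ s (f x) (f y)) :
    ENat.card (Quot r) = ENat.card (Quot s) := by
  have hr : Equivalence r :=
    ⟨fun x => (h x x).2 (hs.refl _), fun hxy => (h _ _).2 (hs.symm ((h _ _).1 hxy)),
      fun hxy hyz => (h _ _).2 (hs.trans ((h _ _).1 hxy) ((h _ _).1 hyz))⟩
  refine ENat.card_eq_of_surjective_of_eq_iff (Quot.mk r) (Quot.mk s ∘ f) Quot.mk_surjective
    (Quot.mk_surjective.comp hf) fun x y => ?_
  rw [Function.comp_apply, Function.comp_apply, hr.quot_mk_eq_iff, hs.quot_mk_eq_iff, h]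

theorem ZMod.intCast_comp_eq_intCast_comp_iff {ι : Type*} {m : ℕ} {v w : ι → ℤ} :
    (Int.cast ∘ v : ι → ZMod m) = Int.cast ∘ w ↔ ∃ u, v - w = (m : ℤ) • u := by
  have hdvd (i : ι) : (v i : ZMod m) = w i ↔ (m : ℤ) ∣ v i - w i := by
    rw [eq_comm, ZMod.intCast_eq_intCast_iff_dvd_sub]
  simp only [funext_iff, Function.comp_apply, hdvd]
  constructor
  · intro h
    choose u hu using h
    exact ⟨u, hu⟩
  · rintro ⟨u, hu⟩ i
    exact ⟨u i, hu i⟩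

namespace Function.Involutive

variable {α : Type*} {σ : α → α}

theorem equivalence_eq_or_eq (hσ : Involutive σ) :
    Equivalence fun x y : α => y = x ∨ y = σ x where
  refl _ := .inl rfl
  symm := by
    rintro x _ (rfl | rfl)
    exacts [.inl rfl, .inr (hσ x).symm]
  trans := by
    rintro x _ _ (rfl | rfl) (rfl | rfl)
    exacts [.inl rfl, .inr rfl, .inr rfl, .inl (hσ x)]

theorem two_mul_card_quot (hσ : Involutive σ) :
    2 * ENat.card (Quot fun x y : α => y = x ∨ y = σ x) =
      ENat.card α + (fixedPoints σ).encard := by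
  set r := fun x y : α => y = x ∨ y = σ x
  set q : Quot r → α := Quot.out
  have hmk : ∀ x y, Quot.mk r x = Quot.mk r y ↔ y = x ∨ y = σ x :=
    hσ.equivalence_eq_or_eq.quot_mk_eq_iff
  have hq : Injective q := fun a c h => by rw [← Quot.out_eq a, ← Quot.out_eq c]; exact congrArg _ h
  have hq_mk (x : α) : x = q (Quot.mk r x) ∨ x = σ (q (Quot.mk r x)) :=
    (hmk _ x).1 (Quot.out_eq _)
  have hunion : range q ∪ range (σ ∘ q) = univ :=
    eq_univ_of_forall fun x => (hq_mk x).imp (fun h => ⟨_, h.symm⟩) (fun h => ⟨_, h.symm⟩)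
  have hinter : range q ∩ range (σ ∘ q) = fixedPoints σ := by
    ext x
    constructor
    · rintro ⟨⟨a, rfl⟩, ⟨c, hc⟩⟩
      obtain rfl : c = a := by
        rw [← Quot.out_eq a, ← Quot.out_eq c, hmk]
        exact .inr hc.symm
      exact hc
    · intro hx
      have hqx : q (Quot.mk r x) = x :=
        (hq_mk x).elim Eq.symm fun h => ((congrArg σ h).trans (hσ _)).symm.trans hx.eq
      exact ⟨⟨_, hqx⟩, ⟨_, by rw [Function.comp_apply, hqx, hx.eq]⟩⟩
  calc 2 * ENat.card (Quot r) = (range q).encard + (range (σ ∘ q)).encard := by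
        rw [two_mul, ← image_univ, ← image_univ, hq.encard_image, image_comp,
          hσ.injective.encard_image, hq.encard_image, encard_univ]
    _ = ENat.card α + (fixedPoints σ).encard := by
        rw [← encard_union_add_encard_inter, hunion, hinter, encard_univ]

end Function.Involutive

namespace Matrix

open Submodule.Quotient

variable {ι : Type*} [Fintype ι]

abbrev Coker (B : Matrix ι ι ℤ) : Type _ := (ι → ℤ) ⧸ LinearMap.range B.mulVecLin

theorem mk_eq_mk_coker_iff (B : Matrix ι ι ℤ) (x y : ι → ℤ) :
    (mk x : B.Coker) = mk y ↔ ∃ z, x - y = B *ᵥ z := by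
  simp only [Submodule.Quotient.eq, LinearMap.mem_range, mulVecLin_apply, eq_comm]

theorem mk_eq_neg_sub_mk_coker_iff (B : Matrix ι ι ℤ) (b x y : ι → ℤ) :
    (mk y : B.Coker) = -mk x - mk b ↔ ∃ z, x + y + b = B *ᵥ z := by
  rw [← mk_neg, ← mk_sub, mk_eq_mk_coker_iff, show y - (-x - b) = x + y + b by abel]

theorem exists_eq_mulVec_sub_or_add_iff (B : Matrix ι ι ℤ) (b x y : ι → ℤ) :
    ((∃ z, x - y = B *ᵥ z) ∨ ∃ z, x + y + b = B *ᵥ z) ↔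
      (mk y : B.Coker) = mk x ∨ (mk y : B.Coker) = -mk x - mk b := by
  rw [eq_comm, mk_eq_mk_coker_iff, mk_eq_neg_sub_mk_coker_iff]

theorem infinite_coker_of_det_eq_zero [DecidableEq ι] {B : Matrix ι ι ℤ} (h : B.det = 0) :
    Infinite B.Coker := by
  obtain ⟨v, hv, hvB⟩ := exists_vecMul_eq_zero_iff.mpr h
  refine Infinite.of_injective (fun k : ℤ => mk (k • v)) fun k l hkl => ?_
  obtain ⟨z, hz⟩ := (mk_eq_mk_coker_iff B _ _).mp hkl
  have : (k - l) * (v ⬝ᵥ v) = 0 := by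
    rw [← smul_eq_mul, ← dotProduct_smul, sub_smul, hz, dotProduct_mulVec, hvB, zero_dotProduct]
  exact sub_eq_zero.mp ((mul_eq_zero.mp this).resolve_right (dotProduct_self_eq_zero.not.mpr hv))

theorem natCard_coker_of_det_ne_zero [DecidableEq ι] {B : Matrix ι ι ℤ} (h : B.det ≠ 0) :
    Nat.card B.Coker = B.det.natAbs := by
  rw [← Submodule.natAbs_det_equiv _
      (LinearEquiv.ofInjective _ (mulVec_injective_of_det_ne_zero h)),
    ← LinearMap.det_toLin', toLin'_apply']
  rfl

theorem card_coker [DecidableEq ι] (B : Matrix ι ι ℤ) :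
    ENat.card B.Coker = intAbsInfty B.det := by
  by_cases h : B.det = 0
  · have := infinite_coker_of_det_eq_zero h
    rw [ENat.card_eq_top_of_infinite, intAbsInfty, if_pos h]
  · have := Nat.finite_of_card_ne_zero
      ((natCard_coker_of_det_ne_zero h).trans_ne (Int.natAbs_ne_zero.mpr h))
    rw [ENat.card_eq_coe_natCard, natCard_coker_of_det_ne_zero h, intAbsInfty, if_neg h]

theorem mk_mem_fixedPoints_neg_sub_mk_iff (B : Matrix ι ι ℤ) (b x : ι → ℤ) :
    (mk x : B.Coker) ∈ fixedPoints (fun g => -g - mk b) ↔ ∃ w, (2 : ℤ) • x + b = B *ᵥ w := by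
  rw [mem_fixedPoints, IsFixedPt, eq_comm, mk_eq_neg_sub_mk_coker_iff, two_smul]

theorem map_intCast_mulVec {R : Type*} [Ring R] (B : Matrix ι ι ℤ) (w : ι → ℤ) :
    B.map (Int.cast : ℤ → R) *ᵥ (Int.cast ∘ w) = Int.cast ∘ (B *ᵥ w) :=
  funext fun i => ((Int.castRingHom R).map_mulVec B w i).symm

theorem map_intCast_mulVec_eq_iff (B : Matrix ι ι ℤ) (b w : ι → ℤ) :
    B.map (Int.cast : ℤ → ZMod 2) *ᵥ (Int.cast ∘ w) = Int.cast ∘ b ↔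
      ∃ x, (2 : ℤ) • x + b = B *ᵥ w := by
  rw [map_intCast_mulVec, ZMod.intCast_comp_eq_intCast_comp_iff]
  simp only [sub_eq_iff_eq_add', eq_comm (a := B *ᵥ w), Nat.cast_ofNat, add_comm b]

theorem mk_eq_mk_coker_iff_of_two_smul_add_eq {B : Matrix ι ι ℤ} (hB : Injective B.mulVec)
    {b x x' w w' : ι → ℤ} (h : (2 : ℤ) • x + b = B *ᵥ w) (h' : (2 : ℤ) • x' + b = B *ᵥ w') :
    (mk x : B.Coker) = mk x' ↔ (Int.cast ∘ w : ι → ZMod 2) = Int.cast ∘ w' := by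
  have hkey : B *ᵥ (w - w') = (2 : ℤ) • (x - x') := by
    rw [mulVec_sub, ← h, ← h', smul_sub]
    abel
  rw [mk_eq_mk_coker_iff, ZMod.intCast_comp_eq_intCast_comp_iff, Nat.cast_ofNat]
  constructor
  · rintro ⟨z, hz⟩
    exact ⟨z, hB (by rw [hkey, hz, mulVec_smul])⟩
  · rintro ⟨u, hu⟩
    refine ⟨u, smul_right_injective _ two_ne_zero ?_⟩
    change (2 : ℤ) • (x - x') = (2 : ℤ) • (B *ᵥ u)
    rw [← hkey, hu, mulVec_smul]

theorem encard_fixedPoints_neg_sub_mk [DecidableEq ι] {B : Matrix ι ι ℤ} (hB : B.det ≠ 0)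
    (b : ι → ℤ) : (fixedPoints fun g : B.Coker => -g - mk b).encard =
      ENat.card {z : ι → ZMod 2 // B.map Int.cast *ᵥ z = fun i => (b i : ZMod 2)} := by
  rw [← ENat.card_coe_set_eq]
  -- both sides are quotients of the set of pairs `(x, w)` with `2x + b = Bw`, by the same relation
  refine ENat.card_eq_of_surjective_of_eq_iff
    (W := {p : (ι → ℤ) × (ι → ℤ) // (2 : ℤ) • p.1 + b = B *ᵥ p.2})
    (fun p => ⟨mk p.1.1, (mk_mem_fixedPoints_neg_sub_mk_iff B b _).2 ⟨_, p.2⟩⟩)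
    (fun p => ⟨Int.cast ∘ p.1.2, (map_intCast_mulVec_eq_iff B b _).2 ⟨_, p.2⟩⟩) ?_ ?_ ?_
  · rintro ⟨g, hg⟩
    obtain ⟨x, rfl⟩ := mk_surjective _ g
    obtain ⟨w, hw⟩ := (mk_mem_fixedPoints_neg_sub_mk_iff B b x).1 hg
    exact ⟨⟨(x, w), hw⟩, rfl⟩
  · rintro ⟨z, hz⟩
    choose w hw using fun i => ZMod.intCast_surjective (z i)
    have hwz : Int.cast ∘ w = z := funext hw
    obtain ⟨x, hx⟩ := (map_intCast_mulVec_eq_iff B b w).1 (hwz ▸ hz)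
    exact ⟨⟨(x, w), hx⟩, Subtype.ext hwz⟩
  · rintro ⟨⟨x, w⟩, h⟩ ⟨⟨x', w'⟩, h'⟩
    simp only [Subtype.mk.injEq]
    exact mk_eq_mk_coker_iff_of_two_smul_add_eq (mulVec_injective_of_det_ne_zero hB) h h'

end Matrix

open Submodule.Quotient in
/-- For the equivalence relation on `ℤⁿ` given by `x ~ y ↔ ∃ z, x - y = Bz ∨ x + y + b = Bz`,
the number `E(B,b)` of equivalence classes satisfies `E(B,b) = (|det B|_∞ + O(B,b))/2`,
computed in `ℕ ∪ {∞}` (stated equivalently as `2 ⬝ E(B,b) = |det B|_∞ + O(B,b)`); in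
particular there are infinitely many classes when `det B = 0`. -/
theorem stmt13 {n : ℕ} (B : Matrix (Fin n) (Fin n) ℤ) (b : Fin n → ℤ) :
    2 * ENat.card (Quot (fun x y : Fin n → ℤ =>
        (∃ z : Fin n → ℤ, x - y = B *ᵥ z) ∨ (∃ z : Fin n → ℤ, x + y + b = B *ᵥ z))) =
      intAbsInfty B.det + (Ocount B b : ℕ∞) := by
  have hσ : Involutive fun g : B.Coker => -g - mk b := fun g => by simp
  rw [ENat.card_quot_eq_of_surjective hσ.equivalence_eq_or_eq _ (mk_surjective _)
      (exists_eq_mulVec_sub_or_add_iff B b), hσ.two_mul_card_quot, card_coker]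
  by_cases hB : B.det = 0
  · simp only [intAbsInfty, hB, if_true, top_add]
  · rw [encard_fixedPoints_neg_sub_mk hB, ENat.card_eq_coe_natCard]
    rfl
end
end
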